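/- arXiv:1609.05482 — 10 statements merged into one kernel-verified Lean document; each statement's English description precedes it below -/
import Mathlib

section
/- Let f : X → Y be a quasicontinuous map from a topological space X to a regular topological space Y, and let Z be a dense subset of X. Then the set of continuity points of the restriction f|Z equals C(f) ∩ Z, where C(f) is the set of continuity points of f (in particular, every continuity point of f|Z is a continuity point of f). -/
open Topology Set

universe u v

/-- `f` is quasicontinuous at `x`. -/
def QuasiContinuousAt {X : Type*} {Y : Type*} [TopologicalSpace X] [TopologicalSpace Y]
    (f : X → Y) (x : X) : Prop :=
  ∀ Ox ∈ nhds x, ∀ Oy ∈ nhds (f x),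
    ∃ U : Set X, IsOpen U ∧ U.Nonempty ∧ U ⊆ Ox ∧ f '' U ⊆ Oy

/-- `f` is quasicontinuous. -/
def QuasiContinuous {X Y : Type*} [TopologicalSpace X] [TopologicalSpace Y] (f : X → Y) : Prop :=
  ∀ x, QuasiContinuousAt f x

/-- The set of continuity points of a map. -/
def ContinuityPoints {Z X : Type*} [TopologicalSpace Z] [TopologicalSpace X] (f : Z → X) :
    Set Z :=
  {z | ContinuousAt f z}

/-- A multivalued map (represented as `Φ : Z → Set X`) is usco if it has nonempty compact
values and is upper semicontinuous. -/
def IsUsco {Z X : Type*} [TopologicalSpace Z] [TopologicalSpace X] (Φ : Z → Set X) : Prop :=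
  (∀ z, (Φ z).Nonempty) ∧ (∀ z, IsCompact (Φ z)) ∧
    ∀ U : Set X, IsOpen U → IsOpen {z | Φ z ⊆ U}

/-- A minimal usco map. -/
def IsMinimalUsco {Z X : Type*} [TopologicalSpace Z] [TopologicalSpace X] (Φ : Z → Set X) :
    Prop :=
  IsUsco Φ ∧ ∀ Ψ : Z → Set X, IsUsco Ψ → (∀ z, Ψ z ⊆ Φ z) → Ψ = Φ

/-- `Φ` is single-valued at `z`. -/
def SingleValuedAt {Z X : Type*} (Φ : Z → Set X) (z : Z) : Prop := ∃ x, Φ z = {x}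

/-- A class of topological spaces (in universe `u`). -/
def SpaceClass : Type (u + 1) := ∀ Z : Type u, TopologicalSpace Z → Prop

/-- All members of the class are Baire spaces. -/
def IsBaireClass (P : SpaceClass.{u}) : Prop :=
  ∀ (Z : Type u) [tZ : TopologicalSpace Z], P Z tZ → BaireSpace Z

/-- The class is closed under taking open subspaces. -/
def ClosedUnderOpenSubspaces (P : SpaceClass.{u}) : Prop :=
  ∀ (Z : Type u) [tZ : TopologicalSpace Z], P Z tZ →
    ∀ U : Set Z, IsOpen U → P ↥U inferInstance

/-- The class is closed under taking dense `Gδ`-subspaces. -/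
def ClosedUnderDenseGdelta (P : SpaceClass.{u}) : Prop :=
  ∀ (Z : Type u) [tZ : TopologicalSpace Z], P Z tZ →
    ∀ S : Set Z, Dense S → IsGδ S → P ↥S inferInstance

/-- The class is closed under taking dense Baire subspaces. -/
def ClosedUnderDenseBaire (P : SpaceClass.{u}) : Prop :=
  ∀ (Z : Type u) [tZ : TopologicalSpace Z], P Z tZ →
    ∀ S : Set Z, Dense S → BaireSpace ↥S → P ↥S inferInstance

/-- `X` is `𝒞`-Piotrowski: every quasicontinuous map from a nonempty member of the class `𝒞`
to `X` has a continuity point. -/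
def IsPiotrowskiFor (P : SpaceClass.{u}) (X : Type v) [TopologicalSpace X] : Prop :=
  ∀ (Z : Type u) [tZ : TopologicalSpace Z], P Z tZ → Nonempty Z →
    ∀ f : Z → X, QuasiContinuous f → ∃ z, ContinuousAt f z

/-- `X` is strong `𝒞`-Piotrowski: for every quasicontinuous map from a member of `𝒞` to `X`
the set of continuity points is comeager. -/
def IsStrongPiotrowskiFor (P : SpaceClass.{u}) (X : Type v) [TopologicalSpace X] : Prop :=
  ∀ (Z : Type u) [tZ : TopologicalSpace Z], P Z tZ →
    ∀ f : Z → X, QuasiContinuous f → ContinuityPoints f ∈ residual Z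

/-- `X` is `𝒞`-Stegall. -/
def IsStegallFor (P : SpaceClass.{u}) (X : Type v) [TopologicalSpace X] : Prop :=
  ∀ (Z : Type u) [tZ : TopologicalSpace Z], P Z tZ → Nonempty Z →
    ∀ Φ : Z → Set X, IsMinimalUsco Φ → ∃ z, SingleValuedAt Φ z

/-- `X` is strong `𝒞`-Stegall. -/
def IsStrongStegallFor (P : SpaceClass.{u}) (X : Type v) [TopologicalSpace X] : Prop :=
  ∀ (Z : Type u) [tZ : TopologicalSpace Z], P Z tZ →
    ∀ Φ : Z → Set X, IsMinimalUsco Φ → {z | SingleValuedAt Φ z} ∈ residual Z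

/-- The class of all Baire spaces (in universe `u`). -/
def BaireClass : SpaceClass.{u} := fun Z tZ => @BaireSpace Z tZ

/-- `X` is Piotrowski. -/
def IsPiotrowski (X : Type v) [TopologicalSpace X] : Prop :=
  IsPiotrowskiFor BaireClass.{u} X

/-- `d` is a metric on `X` (not necessarily related to the topology of `X`). -/
structure IsMetric {X : Type*} (d : X → X → ℝ) : Prop where
  self : ∀ x, d x x = 0
  eq_of : ∀ x y, d x y = 0 → x = y
  symm : ∀ x y, d x y = d y x
  triangle : ∀ x y z, d x z ≤ d x y + d y z

/-- `X` is fragmented by `d`: every nonempty subset has a nonempty relatively open subset of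
`d`-diameter `< ε`. -/
def FragmentedBy (X : Type*) [TopologicalSpace X] (d : X → X → ℝ) : Prop :=
  ∀ ε : ℝ, 0 < ε → ∀ A : Set X, A.Nonempty →
    ∃ V : Set X, IsOpen V ∧ (A ∩ V).Nonempty ∧ ∀ x ∈ A ∩ V, ∀ y ∈ A ∩ V, d x y < ε

/-- The topology generated by `d` is finer than the topology of `X`. -/
def MetricTopFiner (X : Type*) [TopologicalSpace X] (d : X → X → ℝ) : Prop :=
  ∀ U : Set X, IsOpen U → ∀ x ∈ U, ∃ ε : ℝ, 0 < ε ∧ {y | d x y < ε} ⊆ U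

/-- `X` is fragmentable. -/
def Fragmentable (X : Type*) [TopologicalSpace X] : Prop :=
  ∃ d : X → X → ℝ, IsMetric d ∧ FragmentedBy X d

/-- `X` is strictly fragmented by the metric `d`. -/
def StrictlyFragmentedBy (X : Type*) [TopologicalSpace X] (d : X → X → ℝ) : Prop :=
  IsMetric d ∧ FragmentedBy X d ∧ MetricTopFiner X d

/-- `X` is strictly fragmentable. -/
def StrictlyFragmentable (X : Type*) [TopologicalSpace X] : Prop :=
  ∃ d : X → X → ℝ, StrictlyFragmentedBy X d

/-- The countable family `𝒰` separates the points of `S` from the points of `Sᶜ`: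
some member of the family contains exactly one point of any pair `x ∈ S`, `y ∉ S`. -/
def SeparatesFrom {K : Type*} (𝒰 : ℕ → Set K) (S : Set K) : Prop :=
  ∀ x ∈ S, ∀ y ∈ Sᶜ, ∃ n, (x ∈ 𝒰 n ∧ y ∉ 𝒰 n) ∨ (x ∉ 𝒰 n ∧ y ∈ 𝒰 n)

/-- `X` has countable separation: some compactification `K` of `X` carries a countable family
of open sets separating the points of (the copy of) `X` from the points of `K \ X`. -/
def HasCountableSeparation (X : Type u) [TopologicalSpace X] : Prop :=
  ∃ (K : Type u) (tK : TopologicalSpace K), @CompactSpace K tK ∧ @T2Space K tK ∧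
    ∃ e : X → K, @Topology.IsEmbedding X K _ tK e ∧ @DenseRange K tK X e ∧
      ∃ 𝒰 : ℕ → Set K, (∀ n, @IsOpen K tK (𝒰 n)) ∧ SeparatesFrom 𝒰 (Set.range e)

/-- A point of `O` sent outside `C` would, by quasicontinuity, come with a nonempty open
piece of `O` sent outside `C`; that piece meets `S`. -/
theorem QuasiContinuous.mapsTo_of_mapsTo_inter_dense {X Y : Type*} [TopologicalSpace X]
    [TopologicalSpace Y] {f : X → Y} (hf : QuasiContinuous f) {S : Set X} (hS : Dense S)
    {O : Set X} (hO : IsOpen O) {C : Set Y} (hC : IsClosed C) (hfOS : MapsTo f (O ∩ S) C) :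
    MapsTo f O C := by
  intro x hx
  by_contra hfx
  obtain ⟨U, hU, hUne, hUO, hUC⟩ :=
    hf x O (hO.mem_nhds hx) Cᶜ (hC.isOpen_compl.mem_nhds hfx)
  obtain ⟨s, hsS, hsU⟩ := hS.exists_mem_open hU hUne
  exact hUC (mem_image_of_mem f hsU) (hfOS ⟨hUO hsU, hsS⟩)

theorem QuasiContinuous.continuousAt_of_continuousWithinAt_dense {X Y : Type*}
    [TopologicalSpace X] [TopologicalSpace Y] [RegularSpace Y] {f : X → Y}
    (hf : QuasiContinuous f) {S : Set X} (hS : Dense S) {x : X}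
    (hfx : ContinuousWithinAt f S x) : ContinuousAt f x := by
  -- Regularity of `Y` lets us test continuity on closed neighbourhoods only.
  refine ((closed_nhds_basis (f x)).tendsto_right_iff).2 fun C ⟨hCx, hC⟩ => ?_
  obtain ⟨O, hO, hxO, hOS⟩ := mem_nhdsWithin.1 (hfx hCx)
  exact Filter.mem_of_superset (hO.mem_nhds hxO) (hf.mapsTo_of_mapsTo_inter_dense hS hO hC hOS)

/-- If `f : X → Y` is a quasicontinuous map into a regular space `Y` and
`S` is a dense subset of `X`, then the set of continuity points of the restriction `f|S`
(computed in the subspace `S`) equals `C(f) ∩ S`. -/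
theorem continuityPoints_restrict_eq {X Y : Type*} [TopologicalSpace X] [TopologicalSpace Y]
    [RegularSpace Y] (f : X → Y) (hf : QuasiContinuous f) (S : Set X) (hS : Dense S) :
    ContinuityPoints (S.restrict f) = Subtype.val ⁻¹' ContinuityPoints f := by
  ext ⟨x, hx⟩
  refine ⟨fun hfS => ?_, fun hfx => hfx.comp continuousAt_subtype_val⟩
  exact hf.continuousAt_of_continuousWithinAt_dense hS
    ((continuousWithinAt_iff_continuousAt_domRestrict f hx).2 hfS)
end

section
/- Let 𝒞 be a class of Baire spaces and let f : C → X be a quasicontinuous map from a non-empty space C ∈ 𝒞 to a 𝒞-Piotrowski regular space X. Then: (1) if 𝒞 is closed under open subspaces, the set C(f) of continuity points of f is dense in C; (2) if 𝒞 is closed under dense G_δ-subspaces, then C(f) is not meager in C; (3) if 𝒞 is closed under open subspaces and dense G_δ-subspaces, then C(f) is a dense Baire subspace of C; (4) if 𝒞 is closed under open subspaces and dense Baire subspaces, then C(f) is comeager in C. -/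
open Topology Set

universe u v

/-!
A quasicontinuous map stays quasicontinuous on any subspace `S ⊆ interior (closure S)`, and
for a regular target a continuity point of the restriction is one of the map itself. So the
`𝒞`-Piotrowski property yields a continuity point of `f` in every nonempty open, dense `Gδ` or
dense Baire subspace that lies in `𝒞`. Open subspaces give density of `C(f)`. A dense `Gδ` inside
the complement of a meagre `C(f)` is impossible, and applying this on every open subspace makes
`C(f)` locally non-meagre, hence Baire. For comeagerness, by the Banach category theorem it
suffices that every nonempty open set contains a nonempty open set in which `C(f)ᶜ` is meagre;
otherwise `C(f)ᶜ` would be a dense Baire subspace of some open set, and would contain a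
continuity point.
-/

section Meagre

variable {Z : Type*} [TopologicalSpace Z]

theorem IsMeagre.exists_nat_isNowhereDense {s : Set Z} (hs : IsMeagre s) :
    ∃ F : ℕ → Set Z, (∀ n, IsNowhereDense (F n)) ∧ s ⊆ ⋃ n, F n := by
  obtain ⟨S, hS, hSc, hsS⟩ := isMeagre_iff_countable_union_isNowhereDense.1 hs
  obtain ⟨F, hF⟩ := (hSc.insert ∅).exists_eq_range (insert_nonempty _ _)
  refine ⟨F, fun n => ?_, ?_⟩
  · rcases (hF ▸ mem_range_self n : F n ∈ insert ∅ S) with hn | hn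
    · exact hn ▸ isNowhereDense_empty
    · exact hS _ hn
  · rw [← sUnion_range, ← hF]
    exact hsS.trans (sUnion_mono (subset_insert _ _))

theorem isNowhereDense_biUnion_inter_of_pairwiseDisjoint {𝒱 : Set (Set Z)}
    (h𝒱o : ∀ V ∈ 𝒱, IsOpen V) (h𝒱d : 𝒱.PairwiseDisjoint id) {F : Set Z → Set Z}
    (hF : ∀ V ∈ 𝒱, IsNowhereDense (F V)) : IsNowhereDense (⋃ V ∈ 𝒱, F V ∩ V) := by
  set M := ⋃ V ∈ 𝒱, F V ∩ V
  rw [isNowhereDense_iff_disjoint, disjoint_left]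
  intro x hxM hx
  obtain ⟨V, hV, -, hxV⟩ := mem_iUnion₂.1 hxM
  have hVM : V ∩ M ⊆ F V := by
    rintro y ⟨hyV, hyM⟩
    obtain ⟨W, hW, hyF, hyW⟩ := mem_iUnion₂.1 hyM
    obtain rfl : W = V := h𝒱d.elim hW hV (not_disjoint_iff.2 ⟨y, hyW, hyV⟩)
    exact hyF
  have hsub : V ∩ interior (closure M) ⊆ interior (closure (F V)) :=
    interior_maximal
      (fun y hy => closure_mono hVM ((h𝒱o V hV).inter_closure ⟨hy.1, interior_subset hy.2⟩))
      ((h𝒱o V hV).inter isOpen_interior)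
  rw [hF V hV] at hsub
  exact hsub ⟨hxV, hx⟩

theorem exists_pairwiseDisjoint_refinement_isNowhereDense_diff {𝒰 : Set (Set Z)}
    (h𝒰 : ∀ U ∈ 𝒰, IsOpen U) :
    ∃ 𝒱 : Set (Set Z), (∀ V ∈ 𝒱, IsOpen V ∧ ∃ U ∈ 𝒰, V ⊆ U) ∧ 𝒱.PairwiseDisjoint id ∧
      IsNowhereDense (⋃₀ 𝒰 \ ⋃₀ 𝒱) := by
  let 𝔉 : Set (Set (Set Z)) :=
    {𝒱 | (∀ V ∈ 𝒱, IsOpen V ∧ ∃ U ∈ 𝒰, V ⊆ U) ∧ 𝒱.PairwiseDisjoint id}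
  obtain ⟨𝒱, h𝒱⟩ := zorn_subset 𝔉 fun c hc𝔉 hc =>
    ⟨⋃₀ c, ⟨fun V ⟨_, h𝒲, hV⟩ => (hc𝔉 h𝒲).1 V hV,
      (hc.pairwiseDisjoint_sUnion id).2 fun _ h𝒲 => (hc𝔉 h𝒲).2⟩,
      fun _ => subset_sUnion_of_mem⟩
  obtain ⟨h𝒱o, h𝒱d⟩ := h𝒱.prop
  refine ⟨𝒱, h𝒱o, h𝒱d, ?_⟩
  have hmax : ∀ G, IsOpen G → (∃ U ∈ 𝒰, G ⊆ U) → Disjoint G (⋃₀ 𝒱) → G = ∅ := by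
    intro G hG hGU hG𝒱
    have hG : G ∈ 𝒱 := h𝒱.mem_of_prop_insert
      ⟨forall_mem_insert.2 ⟨⟨hG, hGU⟩, h𝒱o⟩,
        h𝒱d.insert fun V hV _ => hG𝒱.mono_right (subset_sUnion_of_mem hV)⟩
    exact hG𝒱.eq_bot_of_le (subset_sUnion_of_mem hG)
  set E := ⋃₀ 𝒰 \ ⋃₀ 𝒱
  have h𝒱E : Disjoint (⋃₀ 𝒱) (closure E) :=
    disjoint_sdiff_right.closure_right (isOpen_sUnion fun V hV => (h𝒱o V hV).1)
  rw [isNowhereDense_iff_disjoint, disjoint_left]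
  rintro x ⟨⟨U, hU, hxU⟩, -⟩ hx
  have hempty := hmax (interior (closure E) ∩ U) (isOpen_interior.inter (h𝒰 U hU))
    ⟨U, hU, inter_subset_right⟩ (h𝒱E.symm.mono_left (inter_subset_left.trans interior_subset))
  exact hempty.subset ⟨hx, hxU⟩

/-- Banach category theorem. -/
theorem isMeagre_inter_sUnion {B : Set Z} {𝒰 : Set (Set Z)} (h𝒰o : ∀ U ∈ 𝒰, IsOpen U)
    (h𝒰 : ∀ U ∈ 𝒰, IsMeagre (B ∩ U)) : IsMeagre (B ∩ ⋃₀ 𝒰) := by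
  obtain ⟨𝒱, h𝒱, h𝒱d, hE⟩ := exists_pairwiseDisjoint_refinement_isNowhereDense_diff h𝒰o
  choose! F hFnd hBF using fun V (hV : V ∈ 𝒱) =>
    let ⟨U, hU, hVU⟩ := (h𝒱 V hV).2
    ((h𝒰 U hU).mono (inter_subset_inter_right B hVU)).exists_nat_isNowhereDense
  have hcover : B ∩ ⋃₀ 𝒰 ⊆ (⋃ n, ⋃ V ∈ 𝒱, F V n ∩ V) ∪ (⋃₀ 𝒰 \ ⋃₀ 𝒱) := by
    rintro x ⟨hxB, hxU⟩
    by_cases hx𝒱 : x ∈ ⋃₀ 𝒱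
    · obtain ⟨V, hV, hxV⟩ := hx𝒱
      obtain ⟨n, hn⟩ := mem_iUnion.1 (hBF V hV ⟨hxB, hxV⟩)
      exact Or.inl (mem_iUnion.2 ⟨n, mem_biUnion hV ⟨hn, hxV⟩⟩)
    · exact Or.inr ⟨hxU, hx𝒱⟩
  refine ((isMeagre_iUnion fun n => ?_).union hE.isMeagre).mono hcover
  exact (isNowhereDense_biUnion_inter_of_pairwiseDisjoint (fun V hV => (h𝒱 V hV).1) h𝒱d
    fun V hV => hFnd V hV n).isMeagre

theorem isMeagre_of_forall_exists_isMeagre_inter {B : Set Z}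
    (h : ∀ O, IsOpen O → O.Nonempty → ∃ V ⊆ O, IsOpen V ∧ V.Nonempty ∧ IsMeagre (B ∩ V)) :
    IsMeagre B := by
  set W := ⋃₀ {U | IsOpen U ∧ IsMeagre (B ∩ U)}
  have hWd : Dense W := dense_iff_inter_open.2 fun O hO hne => by
    obtain ⟨V, hVO, hV, ⟨x, hx⟩, hBV⟩ := h O hO hne
    exact ⟨x, hVO hx, V, ⟨hV, hBV⟩, hx⟩
  have hWc : IsNowhereDense Wᶜ := (isClosed_isNowhereDense_iff_compl.2
    ⟨by rw [compl_compl]; exact isOpen_sUnion fun U hU => hU.1, by rwa [compl_compl]⟩).2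
  exact ((isMeagre_inter_sUnion (fun U hU => hU.1) fun U hU => hU.2).union hWc.isMeagre).mono
    fun x hx => (em (x ∈ W)).imp (⟨hx, ·⟩) id

theorem BaireSpace.of_not_isMeagre (h : ∀ U : Set Z, IsOpen U → U.Nonempty → ¬IsMeagre U) :
    BaireSpace Z where
  baire_property f hfo hfd := dense_iff_inter_open.2 fun U hU hne =>
    nonempty_iff_ne_empty.2 fun hUf => h U hU hne <| IsMeagre.mono
      (subset_compl_iff_disjoint_right.2 (disjoint_iff_inter_eq_empty.2 hUf)) <| by
        rw [IsMeagre, compl_compl]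
        exact countable_iInter_mem.2 fun n => residual_of_dense_open (hfo n) (hfd n)

theorem baireSpace_of_not_isMeagre_inter {B : Set Z}
    (h : ∀ W, IsOpen W → (B ∩ W).Nonempty → ¬IsMeagre (B ∩ W)) : BaireSpace B :=
  .of_not_isMeagre fun U hU hne hUm => by
    obtain ⟨W, hW, rfl⟩ := isOpen_induced_iff.1 hU
    have hBW := hUm.image_val
    rw [Subtype.image_preimage_coe] at hBW
    exact h W hW (Subtype.image_preimage_coe B W ▸ hne.image _) hBW

end Meagre

section QuasiContinuous

variable {Z X : Type*} [TopologicalSpace Z] [TopologicalSpace X] {f : Z → X} {S : Set Z}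

theorem Dense.subset_interior_closure (hS : Dense S) : S ⊆ interior (closure S) := by
  rw [hS.closure_eq, interior_univ]
  exact subset_univ S

theorem QuasiContinuous.domRestrict (hf : QuasiContinuous f) (hS : S ⊆ interior (closure S)) :
    QuasiContinuous (S.domRestrict f) := by
  intro z Oz hOz Oy hOy
  obtain ⟨V, hV, hVOz⟩ := (mem_nhds_subtype S z Oz).1 hOz
  obtain ⟨U, hUo, ⟨u, hu⟩, hUV, hUf⟩ :=
    hf z _ (Filter.inter_mem hV (isOpen_interior.mem_nhds (hS z.2))) Oy hOy
  obtain ⟨s, hsU, hsS⟩ := mem_closure_iff.1 (interior_subset (hUV hu).2) U hUo hu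
  exact ⟨Subtype.val ⁻¹' U, hUo.preimage continuous_subtype_val, ⟨⟨s, hsS⟩, hsU⟩,
    fun a ha => hVOz (hUV ha).1, image_subset_iff.2 fun a ha => hUf (mem_image_of_mem f ha)⟩

theorem QuasiContinuous.continuousAt_of_continuousAt_domRestrict [RegularSpace X]
    (hf : QuasiContinuous f) (hS : S ⊆ interior (closure S)) {z : S}
    (hz : ContinuousAt (S.domRestrict f) z) : ContinuousAt f z := by
  rw [ContinuousAt, (closed_nhds_basis (f z)).tendsto_right_iff]
  rintro V ⟨hV, hVc⟩
  obtain ⟨G, hG, hGV⟩ := (mem_nhds_subtype S z _).1 (hz hV)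
  refine Filter.mem_of_superset
    (Filter.inter_mem (interior_mem_nhds.2 hG) (isOpen_interior.mem_nhds (hS z.2)))
    fun y hy => by_contra fun hyV => ?_
  -- quasicontinuity at `y` gives an open set mapped outside `V`; it meets `S` inside `G`
  obtain ⟨U, hUo, ⟨u, hu⟩, hUy, hUf⟩ := hf y _ ((isOpen_interior.inter isOpen_interior).mem_nhds hy)
    _ (hVc.isOpen_compl.mem_nhds hyV)
  obtain ⟨s, hsU, hsS⟩ := mem_closure_iff.1 (interior_subset (hUy hu).2) U hUo hu
  exact hUf (mem_image_of_mem f hsU)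
    (hGV (a := ⟨s, hsS⟩) (interior_subset (hUy hsU).1 : s ∈ G))

theorem IsOpen.continuityPoints_domRestrict (hS : IsOpen S) :
    ContinuityPoints (S.domRestrict f) = Subtype.val ⁻¹' ContinuityPoints f :=
  ext fun _ => hS.isOpenEmbedding_subtypeVal.continuousAt_iff

end QuasiContinuous

section Piotrowski

variable {P : SpaceClass.{u}} {X : Type v} [TopologicalSpace X] [RegularSpace X]
  {D : Type u} [TopologicalSpace D] {f : D → X}

theorem IsPiotrowskiFor.exists_continuousAt_mem (hX : IsPiotrowskiFor P X)
    (hf : QuasiContinuous f) {S : Set D} (hS : S ⊆ interior (closure S)) (hPS : P S inferInstance)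
    (hne : S.Nonempty) : ∃ z ∈ S, ContinuousAt f z := by
  obtain ⟨z, hz⟩ := hX S hPS hne.to_subtype _ (hf.domRestrict hS)
  exact ⟨z, z.2, hf.continuousAt_of_continuousAt_domRestrict hS hz⟩

theorem IsPiotrowskiFor.not_isMeagre_continuityPoints (hX : IsPiotrowskiFor P X)
    (hGδ : ClosedUnderDenseGdelta P) (hD : P D inferInstance) [BaireSpace D] [Nonempty D]
    (hf : QuasiContinuous f) : ¬IsMeagre (ContinuityPoints f) := by
  intro hM
  obtain ⟨t, htC, htG, htd⟩ := mem_residual.1 hM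
  obtain ⟨z, hzt, hz⟩ := hX.exists_continuousAt_mem hf htd.subset_interior_closure
    (hGδ D hD t htd htG) htd.nonempty
  exact htC hzt hz

theorem IsPiotrowskiFor.exists_isOpen_isMeagre_compl_continuityPoints_inter
    (hX : IsPiotrowskiFor P X) (hDB : ClosedUnderDenseBaire P) (hD : P D inferInstance)
    [Nonempty D] (hf : QuasiContinuous f) :
    ∃ V : Set D, IsOpen V ∧ V.Nonempty ∧ IsMeagre ((ContinuityPoints f)ᶜ ∩ V) := by
  by_contra! h
  set B := (ContinuityPoints f)ᶜ
  have hBd : Dense B := dense_iff_inter_open.2 fun V hV hne =>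
    inter_comm B V ▸ nonempty_of_not_isMeagre (h V hV hne)
  have hBb : BaireSpace B := baireSpace_of_not_isMeagre_inter fun V hV hne => h V hV hne.right
  obtain ⟨z, hzB, hz⟩ := hX.exists_continuousAt_mem hf hBd.subset_interior_closure
    (hDB D hD B hBd hBb) hBd.nonempty
  exact hzB hz

end Piotrowski

/-- Let `𝒞` (= `P`) be a class of Baire spaces and `f : C → X` a
quasicontinuous map from a nonempty member of `𝒞` to a `𝒞`-Piotrowski regular space `X`.
(1) If `𝒞` is closed under open subspaces then `C(f)` is dense;
(2) if `𝒞` is closed under dense `Gδ`-subspaces then `C(f)` is not meager;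
(3) if `𝒞` is closed under open subspaces and dense `Gδ`-subspaces then `C(f)` is a dense
    Baire subspace;
(4) if `𝒞` is closed under open subspaces and dense Baire subspaces then `C(f)` is comeager. -/
theorem piotrowski_continuityPoints (P : SpaceClass.{u}) (hB : IsBaireClass P)
    (X : Type v) [TopologicalSpace X] [RegularSpace X] (hX : IsPiotrowskiFor P X)
    (C : Type u) [tC : TopologicalSpace C] (hC : P C tC) (hne : Nonempty C)
    (f : C → X) (hf : QuasiContinuous f) :
    (ClosedUnderOpenSubspaces P → Dense (ContinuityPoints f)) ∧
    (ClosedUnderDenseGdelta P → ¬ IsMeagre (ContinuityPoints f)) ∧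
    (ClosedUnderOpenSubspaces P → ClosedUnderDenseGdelta P →
      Dense (ContinuityPoints f) ∧ BaireSpace ↥(ContinuityPoints f)) ∧
    (ClosedUnderOpenSubspaces P → ClosedUnderDenseBaire P →
      ContinuityPoints f ∈ residual C) := by
  have hCB : BaireSpace C := hB C hC
  have hdense (hOpen : ClosedUnderOpenSubspaces P) : Dense (ContinuityPoints f) :=
    dense_iff_inter_open.2 fun U hU hne =>
      hX.exists_continuousAt_mem hf hU.subset_interior_closure (hOpen C hC U hU) hne
  refine ⟨hdense, fun hGδ => hX.not_isMeagre_continuityPoints hGδ hC hf,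
    fun hOpen hGδ => ⟨hdense hOpen, ?_⟩, fun hOpen hDB => ?_⟩
  · refine baireSpace_of_not_isMeagre_inter fun V hV hne hM => ?_
    have : Nonempty V := hne.right.to_subtype
    have : BaireSpace V := hB V (hOpen C hC V hV)
    refine hX.not_isMeagre_continuityPoints hGδ (hOpen C hC V hV)
      (hf.domRestrict hV.subset_interior_closure) ?_
    rw [hV.continuityPoints_domRestrict]
    exact (hM.preimage_of_isOpenMap continuous_subtype_val hV.isOpenMap_subtype_val).mono
      fun x hx => (⟨hx, x.2⟩ : (x : C) ∈ ContinuityPoints f ∩ V)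
  · suffices hM : IsMeagre (ContinuityPoints f)ᶜ by rwa [IsMeagre, compl_compl] at hM
    refine isMeagre_of_forall_exists_isMeagre_inter fun O hO hne => ?_
    have : Nonempty O := hne.to_subtype
    obtain ⟨V, hV, hVne, hVM⟩ := hX.exists_isOpen_isMeagre_compl_continuityPoints_inter hDB
      (hOpen C hC O hO) (hf.domRestrict hO.subset_interior_closure)
    refine ⟨Subtype.val '' V, Subtype.coe_image_subset O V, hO.isOpenMap_subtype_val V hV,
      hVne.image _, ?_⟩
    have hM := hVM.image_val
    rwa [hO.continuityPoints_domRestrict, ← preimage_compl, image_preimage_inter] at hM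
end

section
/- For any minimal usco map Φ : Z ⊸ X between topological spaces, every selection φ : Z → X of Φ (i.e. every map with φ(z) ∈ Φ(z) for all z ∈ Z) is quasicontinuous. -/
open Topology Set

universe u v

lemma minimalUsco_subset_closed_aux {Z X : Type*} [TopologicalSpace Z] [TopologicalSpace X]
    (Φ : Z → Set X) (hΦ : IsMinimalUsco Φ) (W : Set Z) (hW : IsOpen W)
    (F : Set X) (hF : IsClosed F) (h : ∀ w ∈ W, (Φ w ∩ F).Nonempty) :
    ∀ w ∈ W, Φ w ⊆ F := by
  classical
  obtain ⟨⟨hne, hcpt, husc⟩, hmin⟩ := hΦ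
  set Ψ : Z → Set X := fun z => if z ∈ W then Φ z ∩ F else Φ z with hΨ
  have hsub : ∀ z, Ψ z ⊆ Φ z := by
    intro z; simp only [hΨ]; split_ifs with hz
    · exact Set.inter_subset_left
    · exact le_refl _
  have husco : IsUsco Ψ := by
    refine ⟨?_, ?_, ?_⟩
    · intro z; simp only [hΨ]; split_ifs with hz
      · exact h z hz
      · exact hne z
    · intro z; simp only [hΨ]; split_ifs with hz
      · exact (hcpt z).inter_right hF
      · exact hcpt z
    · intro U hU
      rw [isOpen_iff_mem_nhds]
      intro z hz
      simp only [Set.mem_setOf_eq, hΨ] at hz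
      by_cases hzW : z ∈ W
      · rw [if_pos hzW] at hz
        have h1 : Φ z ⊆ U ∪ Fᶜ := fun x hx => by
          by_cases hxF : x ∈ F
          · exact Or.inl (hz ⟨hx, hxF⟩)
          · exact Or.inr hxF
        have h2 : IsOpen {z | Φ z ⊆ U ∪ Fᶜ} := husc _ (hU.union hF.isOpen_compl)
        have hmem : W ∩ {z | Φ z ⊆ U ∪ Fᶜ} ∈ nhds z :=
          (hW.inter h2).mem_nhds ⟨hzW, h1⟩
        filter_upwards [hmem] with w hw
        obtain ⟨hw1, hw2⟩ := hw
        simp only [Set.mem_setOf_eq, hΨ, if_pos hw1]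
        rintro x ⟨hx1, hx2⟩
        rcases hw2 hx1 with hx | hx
        · exact hx
        · exact absurd hx2 hx
      · rw [if_neg hzW] at hz
        have hmem : {z | Φ z ⊆ U} ∈ nhds z := (husc U hU).mem_nhds hz
        filter_upwards [hmem] with w hw
        exact (hsub w).trans hw
  have heq := hmin Ψ husco hsub
  intro w hw
  have hw' : Ψ w = Φ w := congrFun heq w
  rw [← hw']
  simp only [hΨ, if_pos hw]
  exact Set.inter_subset_right

/-- Every selection of a minimal usco map is quasicontinuous. -/
theorem quasiContinuous_of_selection_minimalUsco {Z X : Type*} [TopologicalSpace Z]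
    [TopologicalSpace X] (Φ : Z → Set X) (hΦ : IsMinimalUsco Φ)
    (φ : Z → X) (hφ : ∀ z, φ z ∈ Φ z) :
    QuasiContinuous φ := by
  intro z Oz hOz Oy hOy
  obtain ⟨W, hWsub, hWopen, hzW⟩ := mem_nhds_iff.mp hOz
  obtain ⟨V, hVsub, hVopen, hzV⟩ := mem_nhds_iff.mp hOy
  by_cases hcase : ∃ u ∈ W, Φ u ⊆ V
  · obtain ⟨u, huW, huV⟩ := hcase
    have hGopen := hΦ.1.2.2 V hVopen
    refine ⟨W ∩ {z | Φ z ⊆ V}, hWopen.inter hGopen, ⟨u, huW, huV⟩,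
      Set.inter_subset_left.trans hWsub, ?_⟩
    rintro x ⟨w, ⟨hw1, hw2⟩, rfl⟩
    exact hVsub (hw2 (hφ w))
  · push_neg at hcase
    have hall : ∀ w ∈ W, (Φ w ∩ Vᶜ).Nonempty := by
      intro w hw
      obtain ⟨x, hx1, hx2⟩ := Set.not_subset.mp (hcase w hw)
      exact ⟨x, hx1, hx2⟩
    have := minimalUsco_subset_closed_aux Φ hΦ W hWopen Vᶜ hVopen.isClosed_compl hall
      z hzW (hφ z)
    exact absurd hzV this
end

section
/- Let Φ : Z ⊸ X be a minimal usco map from a topological space Z to a Hausdorff topological space X, and let Y be a subspace of Z which is either open or dense in Z. Then the restriction Φ|Y : Y ⊸ X is a minimal usco map. -/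
open Topology Set

universe u v

/-- A minimal usco satisfies: if it meets a closed set `F` at every point of an open set `U`,
then it is contained in `F` on all of `U`. -/
lemma crit_of_minimalUsco {Z X : Type*} [TopologicalSpace Z] [TopologicalSpace X]
    {Φ : Z → Set X} (h : IsMinimalUsco Φ) {U : Set Z} (hU : IsOpen U)
    {F : Set X} (hF : IsClosed F) (hne : ∀ z ∈ U, (Φ z ∩ F).Nonempty) :
    ∀ z ∈ U, Φ z ⊆ F := by
  classical
  obtain ⟨⟨hne', hcpt, husc⟩, hmin⟩ := h
  set Ψ : Z → Set X := fun z => if z ∈ U then Φ z ∩ F else Φ z with hΨdef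
  have hPsiUsco : IsUsco Ψ := by
    refine ⟨fun z => ?_, fun z => ?_, fun W hW => ?_⟩
    · by_cases hz : z ∈ U
      · simpa [Ψ, hz] using hne z hz
      · simpa [Ψ, hz] using hne' z
    · by_cases hz : z ∈ U
      · simpa [Ψ, hz] using (hcpt z).inter_right hF
      · simpa [Ψ, hz] using hcpt z
    · have heq : {z | Ψ z ⊆ W} = {z | Φ z ⊆ W} ∪ (U ∩ {z | Φ z ⊆ W ∪ Fᶜ}) := by
        ext z
        by_cases hz : z ∈ U
        · simp only [Ψ, hz, if_pos, mem_setOf_eq, mem_union, mem_inter_iff, true_and]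
          constructor
          · intro hsub
            right
            intro x hx
            by_cases hxF : x ∈ F
            · exact Or.inl (hsub ⟨hx, hxF⟩)
            · exact Or.inr hxF
          · rintro (h1 | h1)
            · exact fun x hx => h1 hx.1
            · intro x hx
              rcases h1 hx.1 with h2 | h2
              · exact h2
              · exact absurd hx.2 h2
        · simp [Ψ, hz, mem_setOf_eq]
      rw [heq]
      exact (husc W hW).union (hU.inter (husc _ (hW.union hF.isOpen_compl)))
  have heq : Ψ = Φ := by
    refine hmin Ψ hPsiUsco fun z => ?_
    by_cases hz : z ∈ U
    · simpa [Ψ, hz] using inter_subset_left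
    · simp [Ψ, hz]
  intro z hz
  have h2 : Φ z = Φ z ∩ F := by
    conv_lhs => rw [← heq]
    simp [Ψ, hz]
  rw [h2]
  exact inter_subset_right

/-- Conversely, an usco map into a Hausdorff space satisfying the criterion is minimal. -/
lemma minimalUsco_of_crit {Z X : Type*} [TopologicalSpace Z] [TopologicalSpace X] [T2Space X]
    {Φ : Z → Set X} (husco : IsUsco Φ)
    (crit : ∀ U : Set Z, IsOpen U → ∀ F : Set X, IsClosed F →
      (∀ z ∈ U, (Φ z ∩ F).Nonempty) → ∀ z ∈ U, Φ z ⊆ F) :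
    IsMinimalUsco Φ := by
  refine ⟨husco, fun Ψ hΨ hsub => ?_⟩
  funext z₀
  refine Subset.antisymm (hsub z₀) ?_
  intro x hx
  by_contra hxΨ
  obtain ⟨W, V, hWopen, hVopen, hKW, hxV, hdisj⟩ :
      SeparatedNhds (Ψ z₀) {x} :=
    SeparatedNhds.of_isCompact_isCompact (hΨ.2.1 z₀) isCompact_singleton
      (disjoint_singleton_right.2 hxΨ)
  set U₀ : Set Z := {z | Ψ z ⊆ W} with hU₀def
  have hU₀open : IsOpen U₀ := hΨ.2.2 W hWopen
  have hz₀ : z₀ ∈ U₀ := hKW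
  have hmeets : ∀ z ∈ U₀, (Φ z ∩ closure W).Nonempty := by
    intro z hz
    obtain ⟨w, hw⟩ := hΨ.1 z
    exact ⟨w, hsub z hw, subset_closure (hz hw)⟩
  have hsubcl : Φ z₀ ⊆ closure W := crit U₀ hU₀open (closure W) isClosed_closure hmeets z₀ hz₀
  have hxcl : x ∈ closure W := hsubcl hx
  obtain ⟨y, hyV, hyW⟩ := mem_closure_iff.mp hxcl V hVopen (hxV rfl)
  exact (disjoint_left.mp hdisj hyW) hyV

/-- The restriction of a minimal usco map (into a Hausdorff space) to an
open or dense subspace is a minimal usco map. -/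
theorem isMinimalUsco_restrict {Z X : Type*} [TopologicalSpace Z] [TopologicalSpace X]
    [T2Space X] (Φ : Z → Set X) (hΦ : IsMinimalUsco Φ)
    (Y : Set Z) (hY : IsOpen Y ∨ Dense Y) :
    IsMinimalUsco (fun y : Y => Φ y) := by
  have huscoR : IsUsco (fun y : Y => Φ y) := by
    obtain ⟨h1, h2, h3⟩ := hΦ.1
    refine ⟨fun y => h1 y, fun y => h2 y, fun U hU => ?_⟩
    have heq : {y : Y | Φ y ⊆ U} = Subtype.val ⁻¹' {z | Φ z ⊆ U} := rfl
    rw [heq]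
    exact (h3 U hU).preimage continuous_subtype_val
  refine minimalUsco_of_crit huscoR ?_
  intro U' hU' F hF hne y hyU'
  obtain ⟨U, hUopen, rfl⟩ := isOpen_induced_iff.mp hU'
  rcases hY with hYopen | hdense
  · have key : ∀ z ∈ U ∩ Y, Φ z ⊆ F :=
      crit_of_minimalUsco hΦ (hUopen.inter hYopen) hF
        (fun z hz => hne ⟨z, hz.2⟩ hz.1)
    exact key y ⟨hyU', y.2⟩
  · have hallU : ∀ z ∈ U, (Φ z ∩ F).Nonempty := by
      intro z hz
      by_contra hempty
      have hsubc : Φ z ⊆ Fᶜ := fun x hx hxF => hempty ⟨x, hx, hxF⟩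
      have hopen : IsOpen (U ∩ {z' | Φ z' ⊆ Fᶜ}) :=
        hUopen.inter (hΦ.1.2.2 _ hF.isOpen_compl)
      obtain ⟨w, hwY, hwU⟩ := hdense.exists_mem_open hopen ⟨z, hz, hsubc⟩
      obtain ⟨x, hx1, hx2⟩ := hne ⟨w, hwY⟩ hwU.1
      exact hwU.2 hx1 hx2
    exact crit_of_minimalUsco hΦ hUopen hF hallU y hyU'
end

section
/- Let 𝒞 be a class of Baire topological spaces. Every 𝒞-Piotrowski Hausdorff space is 𝒞-Stegall, and every strong 𝒞-Piotrowski Hausdorff space is strong 𝒞-Stegall. -/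
open Topology Set

universe u v

open Classical in
/-- Key lemma: a minimal usco "shrinks into" any open set it meets, on any open set. -/
lemma minimalUsco_key {Z : Type u} {X : Type v} [TopologicalSpace Z] [TopologicalSpace X]
    {Φ : Z → Set X} (h : IsMinimalUsco Φ) {z₀ : Z} {W : Set Z} (hW : IsOpen W) (hz₀ : z₀ ∈ W)
    {U : Set X} (hU : IsOpen U) (hΦU : (Φ z₀ ∩ U).Nonempty) :
    ∃ V : Set Z, IsOpen V ∧ V.Nonempty ∧ V ⊆ W ∧ ∀ v ∈ V, Φ v ⊆ U := by
  obtain ⟨⟨hne, hcpt, husc⟩, hmin⟩ := h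
  by_contra hcon
  push_neg at hcon
  -- every point of W has a value outside U
  have hout : ∀ w ∈ W, (Φ w ∩ Uᶜ).Nonempty := by
    intro w hw
    by_contra hempty
    have hsub : Φ w ⊆ U := by
      intro x hx
      by_contra hxU
      exact hempty ⟨x, hx, hxU⟩
    have hVopen : IsOpen (W ∩ {z | Φ z ⊆ U}) := hW.inter (husc U hU)
    obtain ⟨v, hv, hvbad⟩ := hcon _ hVopen ⟨w, hw, hsub⟩ inter_subset_left
    exact hvbad hv.2
  -- the modified map
  set Ψ : Z → Set X := fun z => if z ∈ W then Φ z ∩ Uᶜ else Φ z with hΨ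
  have hΨsub : ∀ z, Ψ z ⊆ Φ z := by
    intro z
    simp only [hΨ]
    split <;> simp [inter_subset_left]
  have hΨusco : IsUsco Ψ := by
    refine ⟨?_, ?_, ?_⟩
    · intro z
      simp only [hΨ]
      split
      · exact hout z ‹_›
      · exact hne z
    · intro z
      simp only [hΨ]
      split
      · exact (hcpt z).inter_right hU.isClosed_compl
      · exact hcpt z
    · intro G hG
      have hEq : {z | Ψ z ⊆ G} = {z | Φ z ⊆ G} ∪ (W ∩ {z | Φ z ⊆ G ∪ U}) := by
        ext z
        simp only [hΨ, mem_setOf_eq, mem_union, mem_inter_iff]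
        split
        · rename_i hzW
          constructor
          · intro hs
            refine Or.inr ⟨hzW, fun x hx => ?_⟩
            by_cases hxU : x ∈ U
            · exact Or.inr hxU
            · exact Or.inl (hs ⟨hx, hxU⟩)
          · rintro (hs | ⟨_, hs⟩)
            · exact fun x hx => hs hx.1
            · rintro x ⟨hxΦ, hxU⟩
              rcases hs hxΦ with h' | h'
              · exact h'
              · exact absurd h' hxU
        · rename_i hzW
          constructor
          · exact fun hs => Or.inl hs
          · rintro (hs | ⟨hzW', _⟩)
            · exact hs
            · exact absurd hzW' hzW
      rw [hEq]
      exact (husc G hG).union (hW.inter (husc _ (hG.union hU)))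
  have hΨeq : Ψ = Φ := hmin Ψ hΨusco hΨsub
  obtain ⟨x, hxΦ, hxU⟩ := hΦU
  have : x ∈ Ψ z₀ := hΨeq ▸ hxΦ
  simp only [hΨ, if_pos hz₀] at this
  exact this.2 hxU

/-- A selection of a minimal usco is quasicontinuous. -/
lemma selection_quasiContinuous {Z : Type u} {X : Type v} [TopologicalSpace Z]
    [TopologicalSpace X] {Φ : Z → Set X} (h : IsMinimalUsco Φ) {f : Z → X}
    (hf : ∀ z, f z ∈ Φ z) : QuasiContinuous f := by
  intro z Ox hOx Oy hOy
  obtain ⟨W, hWsub, hWopen, hzW⟩ := mem_nhds_iff.mp hOx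
  obtain ⟨U, hUsub, hUopen, hfzU⟩ := mem_nhds_iff.mp hOy
  obtain ⟨V, hVopen, hVne, hVsub, hVU⟩ :=
    minimalUsco_key h hWopen hzW hUopen ⟨f z, hf z, hfzU⟩
  refine ⟨V, hVopen, hVne, hVsub.trans hWsub, ?_⟩
  rintro y ⟨v, hv, rfl⟩
  exact hUsub (hVU v hv (hf v))

/-- At a continuity point of a selection, a minimal usco into a Hausdorff space is
single-valued. -/
lemma singleValued_of_continuousAt {Z : Type u} {X : Type v} [TopologicalSpace Z]
    [TopologicalSpace X] [T2Space X] {Φ : Z → Set X} (h : IsMinimalUsco Φ) {f : Z → X}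
    (hf : ∀ z, f z ∈ Φ z) {z : Z} (hc : ContinuousAt f z) : SingleValuedAt Φ z := by
  refine ⟨f z, ?_⟩
  refine Subset.antisymm ?_ (by simp [hf z])
  intro x hx
  simp only [mem_singleton_iff]
  by_contra hne
  obtain ⟨U, G, hUopen, hGopen, hxU, hfzG, hdisj⟩ := t2_separation hne
  have hGnhds : f ⁻¹' G ∈ nhds z := hc.preimage_mem_nhds (hGopen.mem_nhds hfzG)
  obtain ⟨W, hWsub, hWopen, hzW⟩ := mem_nhds_iff.mp hGnhds
  obtain ⟨V, hVopen, ⟨v, hv⟩, hVsub, hVU⟩ := minimalUsco_key h hWopen hzW hUopen ⟨x, hx, hxU⟩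
  have h1 : f v ∈ U := hVU v hv (hf v)
  have h2 : f v ∈ G := hWsub (hVsub hv)
  exact hdisj.le_bot ⟨h1, h2⟩

/-- For any class `𝒞` (= `P`) of Baire spaces, every `𝒞`-Piotrowski
Hausdorff space is `𝒞`-Stegall and every strong `𝒞`-Piotrowski Hausdorff space is strong
`𝒞`-Stegall. -/
theorem stegall_of_piotrowski (P : SpaceClass.{u}) (hB : IsBaireClass P)
    (X : Type v) [TopologicalSpace X] [T2Space X] :
    (IsPiotrowskiFor P X → IsStegallFor P X) ∧
    (IsStrongPiotrowskiFor P X → IsStrongStegallFor P X) := by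
  constructor
  · intro hP Z tZ hZ hZne Φ hΦ
    set f : Z → X := fun z => (hΦ.1.1 z).some with hfdef
    have hf : ∀ z, f z ∈ Φ z := fun z => (hΦ.1.1 z).some_mem
    obtain ⟨z, hz⟩ := hP Z hZ hZne f (selection_quasiContinuous hΦ hf)
    exact ⟨z, singleValued_of_continuousAt hΦ hf hz⟩
  · intro hP Z tZ hZ Φ hΦ
    set f : Z → X := fun z => (hΦ.1.1 z).some with hfdef
    have hf : ∀ z, f z ∈ Φ z := fun z => (hΦ.1.1 z).some_mem
    have hres := hP Z hZ f (selection_quasiContinuous hΦ hf)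
    exact Filter.mem_of_superset hres
      (fun z hz => singleValued_of_continuousAt hΦ hf hz)
end

section
/- Every fragmentable topological space X is strong Stegall: for every minimal usco map Φ : Z ⊸ X from a non-empty Baire topological space Z, the map Φ is single-valued at all points of some comeager (indeed dense G_δ) subset of Z. -/
open Topology Set

universe u v

/-- Key minimality lemma: if a minimal usco meets an open set `V` at some point of an open
set `W`, then `Φ` maps some nonempty open subset of `W` into `V`. -/
lemma IsMinimalUsco.exists_open_subset {Z X : Type*} [TopologicalSpace Z] [TopologicalSpace X]
    {Φ : Z → Set X} (hΦ : IsMinimalUsco Φ) {W : Set Z} (hW : IsOpen W) {V : Set X}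
    (hV : IsOpen V) {z0 : Z} (hz0 : z0 ∈ W) (hmeet : (Φ z0 ∩ V).Nonempty) :
    ∃ W' : Set Z, IsOpen W' ∧ W'.Nonempty ∧ W' ⊆ W ∧ ∀ z ∈ W', Φ z ⊆ V := by
  classical
  obtain ⟨⟨hne, hcpt, husc⟩, hmin⟩ := hΦ
  by_contra h
  push_neg at h
  -- every point of W has Φ z ∩ Vᶜ nonempty
  have key : ∀ z ∈ W, (Φ z ∩ Vᶜ).Nonempty := by
    intro z hz
    by_contra hemp
    have hsub : Φ z ⊆ V := by
      intro x hx
      by_contra hxV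
      exact hemp ⟨x, hx, hxV⟩
    set O : Set Z := W ∩ {w | Φ w ⊆ V} with hO
    obtain ⟨w, hwO, hnot⟩ := h O (hW.inter (husc V hV)) ⟨z, hz, hsub⟩
      Set.inter_subset_left
    exact hnot hwO.2
  -- the smaller usco
  set Ψ : Z → Set X := fun z => if z ∈ W then Φ z ∩ Vᶜ else Φ z with hΨdef
  have hΨsub : ∀ z, Ψ z ⊆ Φ z := by
    intro z
    by_cases hz : z ∈ W <;> simp [hΨdef, hz]
  have hΨusco : IsUsco Ψ := by
    refine ⟨?_, ?_, ?_⟩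
    · intro z
      by_cases hz : z ∈ W
      · simpa [hΨdef, hz] using key z hz
      · simpa [hΨdef, hz] using hne z
    · intro z
      by_cases hz : z ∈ W
      · simpa [hΨdef, hz] using (hcpt z).inter_right hV.isClosed_compl
      · simpa [hΨdef, hz] using hcpt z
    · intro U hU
      rw [isOpen_iff_mem_nhds]
      intro z hz
      by_cases hzW : z ∈ W
      · have hzU : Φ z ∩ Vᶜ ⊆ U := by simpa [hΨdef, hzW] using hz
        have hΦUV : Φ z ⊆ U ∪ V := by
          intro x hx
          by_cases hxV : x ∈ V
          · exact Or.inr hxV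
          · exact Or.inl (hzU ⟨hx, hxV⟩)
        have hNopen : IsOpen (W ∩ {w | Φ w ⊆ U ∪ V}) := hW.inter (husc _ (hU.union hV))
        refine Filter.mem_of_superset (hNopen.mem_nhds ⟨hzW, hΦUV⟩) ?_
        rintro w ⟨hwW, hwUV⟩
        have : Ψ w = Φ w ∩ Vᶜ := by simp [hΨdef, hwW]
        rw [Set.mem_setOf_eq, this]
        rintro x ⟨hx1, hx2⟩
        rcases hwUV hx1 with hxU | hxV
        · exact hxU
        · exact absurd hxV hx2
      · have hzU : Φ z ⊆ U := by simpa [hΨdef, hzW] using hz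
        refine Filter.mem_of_superset ((husc U hU).mem_nhds hzU) ?_
        intro w hw
        exact (hΨsub w).trans hw
  have heq := hmin Ψ hΨusco hΨsub
  obtain ⟨x, hx1, hx2⟩ := hmeet
  have : x ∈ Ψ z0 := heq ▸ hx1
  simp only [hΨdef, if_pos hz0] at this
  exact this.2 hx2

/-- Every fragmentable space is strong Stegall: any minimal usco map from a
nonempty Baire space into it is single-valued at all points of a comeager (indeed of a dense
`Gδ`) subset of the domain. -/
theorem fragmentable_strong_stegall (X : Type v) [TopologicalSpace X] (hX : Fragmentable X)
    (Z : Type u) [TopologicalSpace Z] [BaireSpace Z] (hne : Nonempty Z)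
    (Φ : Z → Set X) (hΦ : IsMinimalUsco Φ) :
    {z | SingleValuedAt Φ z} ∈ residual Z ∧
      ∃ G : Set Z, IsGδ G ∧ Dense G ∧ ∀ z ∈ G, SingleValuedAt Φ z := by
  obtain ⟨d, hd, hfrag⟩ := hX
  have hdnn : ∀ x y, 0 ≤ d x y := by
    intro x y
    have h1 := hd.triangle x y x
    rw [hd.self, hd.symm y x] at h1
    linarith
  -- the open sets
  set U : ℝ → Set Z := fun ε =>
    {z | ∃ N : Set Z, IsOpen N ∧ z ∈ N ∧
      ∀ w ∈ N, ∀ x ∈ Φ w, ∀ w' ∈ N, ∀ y ∈ Φ w', d x y < ε} with hUdef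
  have hUopen : ∀ ε, IsOpen (U ε) := by
    intro ε
    rw [isOpen_iff_mem_nhds]
    rintro z ⟨N, hNo, hzN, hN⟩
    exact Filter.mem_of_superset (hNo.mem_nhds hzN) fun w hw => ⟨N, hNo, hw, hN⟩
  have hUdense : ∀ ε : ℝ, 0 < ε → Dense (U ε) := by
    intro ε hε
    rw [dense_iff_inter_open]
    intro W hW ⟨z1, hz1⟩
    set A : Set X := ⋃ w ∈ W, Φ w with hA
    have hAne : A.Nonempty := by
      obtain ⟨x, hx⟩ := hΦ.1.1 z1
      exact ⟨x, Set.mem_biUnion hz1 hx⟩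
    obtain ⟨V, hVo, ⟨a, haA, haV⟩, hVd⟩ := hfrag ε hε A hAne
    obtain ⟨z0, hz0W, haΦ⟩ := by
      simpa [hA, Set.mem_iUnion] using haA
    obtain ⟨W', hW'o, hW'ne, hW'sub, hW'V⟩ :=
      hΦ.exists_open_subset hW hVo hz0W ⟨a, haΦ, haV⟩
    obtain ⟨z2, hz2⟩ := hW'ne
    refine ⟨z2, hW'sub hz2, ?_⟩
    refine ⟨W', hW'o, hz2, ?_⟩
    intro w hw x hx w' hw' y hy
    exact hVd x ⟨Set.mem_biUnion (hW'sub hw) hx, hW'V w hw hx⟩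
      y ⟨Set.mem_biUnion (hW'sub hw') hy, hW'V w' hw' hy⟩
  -- the dense Gδ set
  set G : Set Z := ⋂ n : ℕ, U (1 / (n + 1)) with hG
  have hGδ : IsGδ G := .iInter fun n => (hUopen _).isGδ
  have hGdense : Dense G :=
    dense_iInter_of_isOpen (fun n => hUopen _)
      (fun n => hUdense _ (by positivity))
  have hsv : ∀ z ∈ G, SingleValuedAt Φ z := by
    intro z hz
    obtain ⟨x, hx⟩ := hΦ.1.1 z
    refine ⟨x, ?_⟩
    ext y
    simp only [Set.mem_singleton_iff]
    constructor
    · intro hy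
      have hdxy : ∀ n : ℕ, d y x < 1 / (n + 1) := by
        intro n
        obtain ⟨N, hNo, hzN, hN⟩ := Set.mem_iInter.1 hz n
        exact hN z hzN y hy z hzN x hx
      have h0 : d y x = 0 := by
        by_contra h0
        have hpos : 0 < d y x := lt_of_le_of_ne (hdnn y x) (Ne.symm h0)
        obtain ⟨n, hn⟩ := exists_nat_one_div_lt hpos
        exact absurd (hdxy n) (not_lt.2 hn.le)
      exact hd.eq_of y x h0
    · rintro rfl; exact hx
  refine ⟨?_, G, hGδ, hGdense, hsv⟩
  exact mem_residual.2 ⟨G, hsv, hGδ, hGdense⟩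
end

section
/- Every strictly fragmentable topological space X is strong Piotrowski: for every quasicontinuous map φ : Z → X from a non-empty Baire topological space Z, the set of continuity points of φ is comeager (indeed contains a dense G_δ subset) in Z. -/
open Topology Set

universe u v

/-- Every strictly fragmentable space is strong Piotrowski: for any
quasicontinuous map from a nonempty Baire space into it, the set of continuity points is
comeager (indeed contains a dense `Gδ` set). -/
theorem strictlyFragmentable_strong_piotrowski (X : Type v) [TopologicalSpace X]
    (hX : StrictlyFragmentable X)
    (Z : Type u) [TopologicalSpace Z] [BaireSpace Z] (hne : Nonempty Z)
    (φ : Z → X) (hφ : QuasiContinuous φ) :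
    ContinuityPoints φ ∈ residual Z ∧
      ∃ G : Set Z, IsGδ G ∧ Dense G ∧ G ⊆ ContinuityPoints φ := by
  obtain ⟨d, hmet, hfrag, hfiner⟩ := hX
  set Gn : ℕ → Set Z := fun n => {z | ∃ U : Set Z, IsOpen U ∧ z ∈ U ∧
    ∀ x ∈ U, ∀ y ∈ U, d (φ x) (φ y) < 1 / (n + 1)} with hGn
  have hGopen : ∀ n, IsOpen (Gn n) := by
    intro n
    rw [isOpen_iff_mem_nhds]
    rintro z ⟨U, hU, hzU, hdU⟩
    exact Filter.mem_of_superset (hU.mem_nhds hzU) (fun w hw => ⟨U, hU, hw, hdU⟩)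
  have hGdense : ∀ n, Dense (Gn n) := by
    intro n
    rw [dense_iff_inter_open]
    rintro W hW ⟨z0, hz0⟩
    have hε : (0:ℝ) < 1 / (n + 1) := by positivity
    obtain ⟨V, hV, ⟨x0, hx0⟩, hsmall⟩ := hfrag _ hε (φ '' W) ⟨φ z0, mem_image_of_mem _ hz0⟩
    obtain ⟨z1, hz1W, hz1⟩ := hx0.1
    obtain ⟨U, hUopen, ⟨u, hu⟩, hUW, hUV⟩ := hφ z1 W (hW.mem_nhds hz1W) V
      (hV.mem_nhds (by rw [hz1]; exact hx0.2))
    refine ⟨u, hUW hu, U, hUopen, hu, fun x hx y hy => ?_⟩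
    exact hsmall _ ⟨mem_image_of_mem _ (hUW hx), hUV (mem_image_of_mem _ hx)⟩
      _ ⟨mem_image_of_mem _ (hUW hy), hUV (mem_image_of_mem _ hy)⟩
  have hsub : (⋂ n, Gn n) ⊆ ContinuityPoints φ := by
    intro z hz
    have hz' : ∀ n, z ∈ Gn n := by simpa using hz
    rw [ContinuityPoints, mem_setOf_eq, ContinuousAt, Filter.tendsto_def]
    intro N hN
    obtain ⟨W, hWN, hWopen, hzW⟩ := mem_nhds_iff.mp hN
    obtain ⟨ε, hε, hball⟩ := hfiner W hWopen (φ z) hzW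
    obtain ⟨n, hn⟩ := exists_nat_one_div_lt hε
    obtain ⟨U, hUopen, hzU, hdU⟩ := hz' n
    refine Filter.mem_of_superset (hUopen.mem_nhds hzU) (fun y hy => ?_)
    exact hWN (hball (lt_trans (hdU _ hzU _ hy) hn))
  have hGδ : IsGδ (⋂ n, Gn n) := .iInter_of_isOpen hGopen
  have hdense : Dense (⋂ n, Gn n) := dense_iInter_of_isOpen hGopen hGdense
  exact ⟨mem_residual.mpr ⟨_, hsub, hGδ, hdense⟩, _, hGδ, hdense, hsub⟩
end

section
/- Every σ-space (i.e. every regular topological space possessing a σ-discrete network) is strictly fragmentable. -/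
open Topology Set

universe u v

/-- A family of subsets of a topological space is a network if every neighborhood of every
point contains a member of the family containing that point. -/
def IsNetwork {X : Type*} [TopologicalSpace X] (𝒩 : Set (Set X)) : Prop :=
  ∀ x : X, ∀ O : Set X, IsOpen O → x ∈ O → ∃ N ∈ 𝒩, x ∈ N ∧ N ⊆ O

/-- A family of subsets is discrete if every point has a neighborhood meeting at most one
member of the family. -/
def IsDiscreteFamily {X : Type*} [TopologicalSpace X] (𝒩 : Set (Set X)) : Prop :=
  ∀ x : X, ∃ V : Set X, IsOpen V ∧ x ∈ V ∧
    ∀ N₁ ∈ 𝒩, ∀ N₂ ∈ 𝒩, (V ∩ N₁).Nonempty → (V ∩ N₂).Nonempty → N₁ = N₂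

section SigmaAux

open scoped Classical

variable {X : Type*} [TopologicalSpace X]

/-- The points `x, y` agree on (closures of) all members of the `n`-th family. -/
def Agr (𝒩 : ℕ → Set (Set X)) (n : ℕ) (x y : X) : Prop :=
  ∀ N ∈ 𝒩 n, (x ∈ closure N ↔ y ∈ closure N)

lemma Agr.refl (𝒩 : ℕ → Set (Set X)) (n : ℕ) (x : X) : Agr 𝒩 n x x := fun _ _ => Iff.rfl

lemma Agr.symm {𝒩 : ℕ → Set (Set X)} {n : ℕ} {x y : X} (h : Agr 𝒩 n x y) : Agr 𝒩 n y x :=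
  fun N hN => (h N hN).symm

lemma Agr.trans {𝒩 : ℕ → Set (Set X)} {n : ℕ} {x y z : X} (h : Agr 𝒩 n x y)
    (h' : Agr 𝒩 n y z) : Agr 𝒩 n x z :=
  fun N hN => (h N hN).trans (h' N hN)

/-- The `n`-th 0/1 "pseudometric". -/
noncomputable def sdE (𝒩 : ℕ → Set (Set X)) (n : ℕ) (x y : X) : ℝ :=
  if Agr 𝒩 n x y then 0 else 1

lemma sdE_nonneg (𝒩 : ℕ → Set (Set X)) (n : ℕ) (x y : X) : 0 ≤ sdE 𝒩 n x y := by
  unfold sdE; split <;> norm_num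

lemma sdE_le_one (𝒩 : ℕ → Set (Set X)) (n : ℕ) (x y : X) : sdE 𝒩 n x y ≤ 1 := by
  unfold sdE; split <;> norm_num

lemma sdE_symm (𝒩 : ℕ → Set (Set X)) (n : ℕ) (x y : X) : sdE 𝒩 n x y = sdE 𝒩 n y x := by
  unfold sdE
  by_cases h : Agr 𝒩 n x y
  · rw [if_pos h, if_pos h.symm]
  · rw [if_neg h, if_neg (fun h' => h h'.symm)]

lemma ite01_nonneg (p : Prop) [Decidable p] : (0:ℝ) ≤ if p then 0 else 1 := by
  split <;> norm_num

lemma ite01_le_one (p : Prop) [Decidable p] : (if p then (0:ℝ) else 1) ≤ 1 := by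
  split <;> norm_num

lemma sdE_triangle (𝒩 : ℕ → Set (Set X)) (n : ℕ) (x y z : X) :
    sdE 𝒩 n x z ≤ sdE 𝒩 n x y + sdE 𝒩 n y z := by
  unfold sdE
  by_cases h1 : Agr 𝒩 n x y
  · by_cases h2 : Agr 𝒩 n y z
    · rw [if_pos h1, if_pos h2, if_pos (h1.trans h2)]; norm_num
    · rw [if_neg h2]
      linarith [ite01_le_one (Agr 𝒩 n x z), ite01_nonneg (Agr 𝒩 n x y)]
  · rw [if_neg h1]
    linarith [ite01_le_one (Agr 𝒩 n x z), ite01_nonneg (Agr 𝒩 n y z)]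

/-- The fragmenting metric. -/
noncomputable def sDist (𝒩 : ℕ → Set (Set X)) (x y : X) : ℝ :=
  ∑' n, (1 / 2 : ℝ) ^ n * sdE 𝒩 n x y

lemma sDist_summable (𝒩 : ℕ → Set (Set X)) (x y : X) :
    Summable (fun n => (1 / 2 : ℝ) ^ n * sdE 𝒩 n x y) := by
  apply Summable.of_nonneg_of_le
    (fun n => mul_nonneg (by positivity) (sdE_nonneg 𝒩 n x y))
    (fun n => ?_) (summable_geometric_two)
  calc (1 / 2 : ℝ) ^ n * sdE 𝒩 n x y ≤ (1 / 2 : ℝ) ^ n * 1 := by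
        apply mul_le_mul_of_nonneg_left (sdE_le_one 𝒩 n x y) (by positivity)
    _ = (1 / 2 : ℝ) ^ n := by ring

lemma sDist_nonneg (𝒩 : ℕ → Set (Set X)) (x y : X) : 0 ≤ sDist 𝒩 x y :=
  tsum_nonneg (fun n => mul_nonneg (by positivity) (sdE_nonneg 𝒩 n x y))

lemma term_le_sDist (𝒩 : ℕ → Set (Set X)) (n : ℕ) (x y : X) :
    (1 / 2 : ℝ) ^ n * sdE 𝒩 n x y ≤ sDist 𝒩 x y :=
  Summable.le_tsum (sDist_summable 𝒩 x y) n
    (fun m _ => mul_nonneg (by positivity) (sdE_nonneg 𝒩 m x y))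

lemma agr_of_sDist_lt {𝒩 : ℕ → Set (Set X)} {n : ℕ} {x y : X}
    (h : sDist 𝒩 x y < (1 / 2 : ℝ) ^ n) : Agr 𝒩 n x y := by
  by_contra hA
  have : (1 / 2 : ℝ) ^ n * sdE 𝒩 n x y = (1 / 2 : ℝ) ^ n := by
    rw [sdE, if_neg hA]; ring
  have := term_le_sDist 𝒩 n x y
  linarith [this, h, ‹(1 / 2 : ℝ) ^ n * sdE 𝒩 n x y = (1 / 2 : ℝ) ^ n›]

/-- From the network and regularity: closed-closure network refinement. -/
lemma net_closure [T3Space X] {𝒩 : ℕ → Set (Set X)} (hnet : IsNetwork (⋃ n, 𝒩 n))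
    {x : X} {O : Set X} (hO : IsOpen O) (hx : x ∈ O) :
    ∃ n, ∃ N ∈ 𝒩 n, x ∈ closure N ∧ closure N ⊆ O := by
  obtain ⟨t, ht, htc, hts⟩ := exists_mem_nhds_isClosed_subset (hO.mem_nhds hx)
  obtain ⟨N, hN, hxN, hNsub⟩ := hnet x (interior t) isOpen_interior (mem_interior_iff_mem_nhds.2 ht)
  obtain ⟨n, hn⟩ := mem_iUnion.1 hN
  refine ⟨n, N, hn, subset_closure hxN, ?_⟩
  calc closure N ⊆ closure (interior t) := closure_mono hNsub
    _ ⊆ closure t := closure_mono interior_subset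
    _ = t := htc.closure_eq
    _ ⊆ O := hts

/-- One fragmentation step for a single discrete family. -/
lemma frag_step {𝒩 : ℕ → Set (Set X)} (hdisc : ∀ n, IsDiscreteFamily (𝒩 n)) (m : ℕ)
    (A : Set X) (hA : A.Nonempty) :
    ∃ V : Set X, IsOpen V ∧ (A ∩ V).Nonempty ∧
      ∀ x ∈ A ∩ V, ∀ y ∈ A ∩ V, Agr 𝒩 m x y := by
  obtain ⟨a, ha⟩ := hA
  obtain ⟨V₀, hV₀o, haV₀, hV₀⟩ := hdisc m a
  by_cases hcase : ∃ N ∈ 𝒩 m, (V₀ ∩ closure N).Nonempty ∧ ¬ (A ∩ V₀ ⊆ closure N)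
  · obtain ⟨N, hN, hVN, hnsub⟩ := hcase
    obtain ⟨b, hbAV, hbN⟩ := not_subset.1 hnsub
    refine ⟨V₀ ∩ (closure N)ᶜ, hV₀o.inter isClosed_closure.isOpen_compl,
      ⟨b, hbAV.1, hbAV.2, hbN⟩, ?_⟩
    have key : ∀ x ∈ A ∩ (V₀ ∩ (closure N)ᶜ), ∀ M ∈ 𝒩 m, x ∉ closure M := by
      intro x hx M hM hxM
      have h1 : (V₀ ∩ N).Nonempty :=
        closure_nonempty_iff.1 (hVN.mono hV₀o.inter_closure)
      have h2 : (V₀ ∩ M).Nonempty := by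
        have hne : (V₀ ∩ closure M).Nonempty := ⟨x, hx.2.1, hxM⟩
        exact closure_nonempty_iff.1 (hne.mono hV₀o.inter_closure)
      have hMN : M = N := hV₀ M hM N hN h2 h1
      exact hx.2.2 (hMN ▸ hxM)
    intro x hx y hy M hM
    constructor
    · intro hxM; exact absurd hxM (key x hx M hM)
    · intro hyM; exact absurd hyM (key y hy M hM)
  · push_neg at hcase
    refine ⟨V₀, hV₀o, ⟨a, ha, haV₀⟩, ?_⟩
    intro x hx y hy M hM
    constructor
    · intro hxM
      exact hcase M hM ⟨x, hx.2, hxM⟩ hy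
    · intro hyM
      exact hcase M hM ⟨y, hy.2, hyM⟩ hx

/-- Iterated fragmentation step. -/
lemma frag_stepN {𝒩 : ℕ → Set (Set X)} (hdisc : ∀ n, IsDiscreteFamily (𝒩 n)) (n : ℕ)
    (A : Set X) (hA : A.Nonempty) :
    ∃ V : Set X, IsOpen V ∧ (A ∩ V).Nonempty ∧
      ∀ x ∈ A ∩ V, ∀ y ∈ A ∩ V, ∀ m < n, Agr 𝒩 m x y := by
  induction n with
  | zero => exact ⟨univ, isOpen_univ, by simpa using hA, fun x _ y _ m hm => by omega⟩
  | succ n ih =>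
    obtain ⟨V, hVo, hVne, hV⟩ := ih
    obtain ⟨W, hWo, hWne, hW⟩ := frag_step hdisc n (A ∩ V) hVne
    refine ⟨V ∩ W, hVo.inter hWo, by rwa [← inter_assoc], ?_⟩
    intro x hx y hy m hm
    rw [← inter_assoc] at hx hy
    rcases Nat.lt_succ_iff_lt_or_eq.1 hm with h | h
    · exact hV x hx.1 y hy.1 m h
    · subst h; exact hW x ⟨hx.1, hx.2⟩ y ⟨hy.1, hy.2⟩
end SigmaAux

set_option maxHeartbeats 1000000 in
/-- Every σ-space (a regular space with a σ-discrete network; here regularity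
is taken in the sense including the `T₁` axiom, i.e. `T3Space`) is strictly fragmentable. -/
theorem sigmaSpace_strictlyFragmentable (X : Type*) [TopologicalSpace X] [T3Space X]
    (𝒩 : ℕ → Set (Set X)) (hdisc : ∀ n, IsDiscreteFamily (𝒩 n))
    (hnet : IsNetwork (⋃ n, 𝒩 n)) :
    StrictlyFragmentable X := by
  refine ⟨sDist 𝒩, ⟨?_, ?_, ?_, ?_⟩, ?_, ?_⟩
  · -- d x x = 0
    intro x
    have : ∀ n, (1 / 2 : ℝ) ^ n * sdE 𝒩 n x x = 0 := by
      intro n; rw [sdE, if_pos (Agr.refl 𝒩 n x)]; ring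
    rw [sDist, tsum_congr this, tsum_zero]
  · -- d x y = 0 → x = y
    intro x y h
    by_contra hxy
    obtain ⟨n, N, hN, hxN, hNsub⟩ :=
      net_closure hnet (isOpen_compl_singleton (x := y)) (by simpa using hxy)
    have hagr : Agr 𝒩 n x y := agr_of_sDist_lt (by rw [h]; positivity)
    have : y ∈ closure N := (hagr N hN).1 hxN
    exact hNsub this rfl
  · -- symm
    intro x y
    unfold sDist
    congr 1; funext n; rw [sdE_symm]
  · -- triangle
    intro x y z
    unfold sDist
    rw [← Summable.tsum_add (sDist_summable 𝒩 x y) (sDist_summable 𝒩 y z)]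
    apply Summable.tsum_le_tsum _ (sDist_summable 𝒩 x z)
      ((sDist_summable 𝒩 x y).add (sDist_summable 𝒩 y z))
    intro n
    have := sdE_triangle 𝒩 n x y z
    have hp : (0:ℝ) ≤ (1 / 2 : ℝ) ^ n := by positivity
    nlinarith
  · -- fragmented
    intro ε hε A hA
    obtain ⟨n, hn⟩ : ∃ n : ℕ, (1 / 2 : ℝ) ^ n < ε / 2 :=
      exists_pow_lt_of_lt_one (by linarith) (by norm_num)
    obtain ⟨V, hVo, hVne, hV⟩ := frag_stepN hdisc n A hA
    refine ⟨V, hVo, hVne, ?_⟩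
    intro x hx y hy
    have hfin : ∀ m < n, (1 / 2 : ℝ) ^ m * sdE 𝒩 m x y = 0 := by
      intro m hm
      rw [sdE, if_pos (hV x hx y hy m hm)]; ring
    have hsplit := Summable.sum_add_tsum_nat_add n (sDist_summable 𝒩 x y)
    have hsum0 : (∑ m ∈ Finset.range n, (1 / 2 : ℝ) ^ m * sdE 𝒩 m x y) = 0 :=
      Finset.sum_eq_zero (fun m hm => hfin m (Finset.mem_range.1 hm))
    have hs1 : Summable (fun k : ℕ => (1 / 2 : ℝ) ^ (k + n) * sdE 𝒩 (k + n) x y) :=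
      (summable_nat_add_iff n).2 (sDist_summable 𝒩 x y)
    have hs2 : Summable (fun k : ℕ => (1 / 2 : ℝ) ^ (k + n)) :=
      (summable_nat_add_iff n).2 (summable_geometric_two)
    have htail : (∑' k : ℕ, (1 / 2 : ℝ) ^ (k + n) * sdE 𝒩 (k + n) x y)
        ≤ ∑' k : ℕ, (1 / 2 : ℝ) ^ (k + n) := by
      apply Summable.tsum_le_tsum _ hs1 hs2
      intro k
      calc (1 / 2 : ℝ) ^ (k + n) * sdE 𝒩 (k + n) x y
          ≤ (1 / 2 : ℝ) ^ (k + n) * 1 :=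
            mul_le_mul_of_nonneg_left (sdE_le_one 𝒩 _ x y) (by positivity)
        _ = (1 / 2 : ℝ) ^ (k + n) := by ring
    have hgeo : (∑' k : ℕ, (1 / 2 : ℝ) ^ (k + n)) = 2 * (1 / 2 : ℝ) ^ n := by
      simp_rw [pow_add]
      rw [tsum_mul_right, tsum_geometric_two]
    have : sDist 𝒩 x y = ∑' k : ℕ, (1 / 2 : ℝ) ^ (k + n) * sdE 𝒩 (k + n) x y := by
      rw [sDist, ← hsplit, hsum0, zero_add]
    rw [this]
    calc (∑' k : ℕ, (1 / 2 : ℝ) ^ (k + n) * sdE 𝒩 (k + n) x y)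
        ≤ 2 * (1 / 2 : ℝ) ^ n := hgeo ▸ htail
      _ < ε := by linarith
  · -- finer
    intro U hU x hx
    obtain ⟨n, N, hN, hxN, hNsub⟩ := net_closure hnet hU hx
    refine ⟨(1 / 2 : ℝ) ^ n, by positivity, ?_⟩
    intro y hy
    have hagr : Agr 𝒩 n x y := agr_of_sDist_lt hy
    exact hNsub ((hagr N hN).1 hxN)
end

section
/- Let 𝒞 be a class of Baire spaces closed under taking dense G_δ-subsets. A game determined Tychonoff space X is 𝒞-Piotrowski if and only if it is 𝒞-Stegall, and X is strong 𝒞-Piotrowski if and only if it is strong 𝒞-Stegall. -/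
open Topology Set

universe u v

/-- `X` is game determined: the player `Ω` has a winning strategy in the determination game
`DG(X)`. A strategy of `Ω` is a rule `σ` assigning to the moves `A 0, …, A n` of `Σ` the
answer `σ n (A 0, …, A n)`; it must produce a nonempty relatively open subset of the last
move of `Σ` along every legal partial play, and for every infinite legal play the set
`K = ⋂ n, closure (A n)` must be compact and either empty or such that every open
neighborhood of `K` contains all but finitely many of the sets `A n`. -/
def GameDetermined (X : Type v) [TopologicalSpace X] : Prop :=
  ∃ σ : (n : ℕ) → (Fin (n + 1) → Set X) → Set X,
    (∀ (A : ℕ → Set X) (n : ℕ),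
      ((A 0).Nonempty ∧ ∀ k, k < n → (A (k + 1)).Nonempty ∧ A (k + 1) ⊆ σ k (fun i => A i.1)) →
      (σ n (fun i => A i.1)).Nonempty ∧
        ∃ V : Set X, IsOpen V ∧ σ n (fun i => A i.1) = A n ∩ V) ∧
    (∀ A : ℕ → Set X,
      ((A 0).Nonempty ∧ ∀ k, (A (k + 1)).Nonempty ∧ A (k + 1) ⊆ σ k (fun i => A i.1)) →
      IsCompact (⋂ n, closure (A n)) ∧
        ((⋂ n, closure (A n)) = ∅ ∨
          ∀ V : Set X, IsOpen V → (⋂ n, closure (A n)) ⊆ V → ∃ m, ∀ n, m ≤ n → A n ⊆ V))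

open Filter

/-!
Piotrowski ⇒ Stegall: every selection of a minimal usco map is quasicontinuous, and a minimal
usco map into a Hausdorff space is single-valued wherever one of its selections is continuous.

Stegall ⇒ Piotrowski: for a quasicontinuous `f : Z → X`, let `Σ` play images `f '' U` of open
sets `U ⊆ Z` against a winning strategy of `Ω` in `DG(X)`. Maximal families of such partial plays
with disjoint last moves, refined level by level, cover a dense `Gδ` set `D ⊆ Z` (Baire), and
each `z ∈ D` follows a play whose `n`-th move contains the `(n+1)`-st move of the plays of all
points of `D` near `z`. Since `Ω` wins, the limit
sets `K z = ⋂ₙ closure (f '' Uₙ)` form an usco map on `D`; cutting it down by the cluster sets of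
`f` and passing to a minimal usco map `Φ`, quasicontinuity of `f` makes `f` continuous wherever
`Φ` is single-valued. As `D` is a dense `Gδ`, it belongs to `𝒞`, and comeager subsets of `D` are
comeager in `Z`.
-/

theorem exists_pairwiseDisjoint_dense_biUnion {Z ι : Type*} [TopologicalSpace Z] {C : Set ι}
    {t : ι → Set Z} (ht : ∀ G, IsOpen G → G.Nonempty → ∃ i ∈ C, (t i).Nonempty ∧ t i ⊆ G) :
    ∃ S ⊆ C, S.PairwiseDisjoint t ∧ Dense (⋃ i ∈ S, t i) := by
  obtain ⟨S, ⟨hSC, hS⟩, hmax⟩ := zorn_subset {S | S ⊆ C ∧ S.PairwiseDisjoint t}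
    fun c hc hchain => ⟨⋃₀ c, ⟨sUnion_subset fun S hS => (hc hS).1,
      (pairwiseDisjoint_sUnion hchain.directedOn).2 fun S hS => (hc hS).2⟩,
      fun _ => subset_sUnion_of_mem⟩
  refine ⟨S, hSC, hS, dense_iff_inter_open.2 fun G hG hGne => ?_⟩
  by_contra hGS
  obtain ⟨i, hiC, hine, hiG⟩ := ht G hG hGne
  have hdisj : ∀ j ∈ S, Disjoint (t i) (t j) := fun j hj =>
    disjoint_left.2 fun x hxi hxj => hGS ⟨x, hiG hxi, mem_biUnion hj hxj⟩
  have hiS : i ∈ S := hmax ⟨insert_subset hiC hSC, hS.insert fun j hj _ => hdisj j hj⟩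
    (subset_insert i S) (mem_insert i S)
  obtain ⟨x, hx⟩ := hine
  exact disjoint_left.1 (hdisj i hiS) hx hx

namespace IsUsco

variable {Z X : Type*} [TopologicalSpace Z] [TopologicalSpace X]

theorem piecewise_diff {Φ : Z → Set X} (hΦ : IsUsco Φ) {U : Set Z} {O : Set X}
    (hU : IsOpen U) (hO : IsOpen O) (hne : ∀ z ∈ U, (Φ z \ O).Nonempty) [DecidablePred (· ∈ U)] :
    IsUsco (U.piecewise (fun z => Φ z \ O) Φ) := by
  refine ⟨fun z => ?_, fun z => ?_, fun V hV => ?_⟩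
  · by_cases hz : z ∈ U <;> simp [hz, hne, hΦ.1 z]
  · by_cases hz : z ∈ U <;> simp [hz, (hΦ.2.1 z).diff hO, hΦ.2.1 z]
  · have hset : {z | U.piecewise (fun z => Φ z \ O) Φ z ⊆ V} =
        (U ∩ {z | Φ z ⊆ V ∪ O}) ∪ {z | Φ z ⊆ V} := by
      ext z
      by_cases hz : z ∈ U
      · simpa [hz, sdiff_subset_iff, union_comm O V] using fun h => h.trans subset_union_left
      · simp [hz]
    rw [hset]
    exact (hU.inter (hΦ.2.2 _ (hV.union hO))).union (hΦ.2.2 V hV)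

theorem iInter_of_isChain [T2Space X] {c : Set (Z → Set X)} (hc : ∀ Ψ ∈ c, IsUsco Ψ)
    (hchain : IsChain (· ≤ ·) c) (hne : c.Nonempty) :
    IsUsco fun z => ⋂ Ψ : c, (Ψ : Z → Set X) z := by
  have := hne.to_subtype
  have hdir : ∀ z, Directed (· ⊇ ·) fun Ψ : c => (Ψ : Z → Set X) z := fun z Ψ₁ Ψ₂ => by
    rcases hchain.total Ψ₁.2 Ψ₂.2 with h | h
    · exact ⟨Ψ₁, subset_rfl, h z⟩
    · exact ⟨Ψ₂, h z, subset_rfl⟩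
  have hK : ∀ (Ψ : c) z, IsCompact ((Ψ : Z → Set X) z) := fun Ψ => (hc Ψ Ψ.2).2.1
  refine ⟨fun z => ?_, fun z => ?_, fun O hO => ?_⟩
  · exact IsCompact.nonempty_iInter_of_directed_nonempty_isCompact_isClosed _ (hdir z)
      (fun Ψ => (hc Ψ Ψ.2).1 z) (fun Ψ => hK Ψ z) fun Ψ => (hK Ψ z).isClosed
  · exact (hK (Classical.arbitrary c) z).of_isClosed_subset
      (isClosed_iInter fun Ψ => (hK Ψ z).isClosed) (iInter_subset _ _)
  · have hset : {z | ⋂ Ψ : c, (Ψ : Z → Set X) z ⊆ O} = ⋃ Ψ : c, {z | (Ψ : Z → Set X) z ⊆ O} := by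
      ext z
      refine ⟨fun hz => ?_, fun hz => ?_⟩
      · exact mem_iUnion.2 (exists_subset_nhds_of_isCompact' (hdir z) (fun Ψ => hK Ψ z)
          (fun Ψ => (hK Ψ z).isClosed) fun x hx => hO.mem_nhds (hz hx))
      · obtain ⟨Ψ, hΨ⟩ := mem_iUnion.1 hz
        exact (iInter_subset _ Ψ).trans hΨ
    rw [hset]
    exact isOpen_iUnion fun Ψ => (hc Ψ Ψ.2).2.2 O hO

theorem exists_minimal [T2Space X] {Φ : Z → Set X} (hΦ : IsUsco Φ) :
    ∃ Ψ : Z → Set X, IsMinimalUsco Ψ ∧ ∀ z, Ψ z ⊆ Φ z := by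
  obtain ⟨Ψ, hΨΦ, hΨ, hmin⟩ := @zorn_le_nonempty₀ (Z → Set X)ᵒᵈ _ {Ψ | IsUsco Ψ}
    (fun c hc hchain Ψ₀ hΨ₀ => ⟨_, iInter_of_isChain hc hchain.symm ⟨Ψ₀, hΨ₀⟩,
      fun Ψ hΨ z => iInter_subset_of_subset ⟨Ψ, hΨ⟩ subset_rfl⟩)
    Φ hΦ
  exact ⟨Ψ, ⟨hΨ, fun Ψ' hΨ' hΨ'Ψ => le_antisymm hΨ'Ψ (hmin hΨ' hΨ'Ψ)⟩, hΨΦ⟩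

theorem inter_of_isClosed_graph {Φ G : Z → Set X} (hΦ : IsUsco Φ)
    (hG : IsClosed {p : Z × X | p.2 ∈ G p.1}) (hne : ∀ z, (Φ z ∩ G z).Nonempty) :
    IsUsco fun z => Φ z ∩ G z := by
  refine ⟨hne, fun z => (hΦ.2.1 z).inter_right (hG.preimage (Continuous.prodMk_right z)),
    fun O hO => isOpen_iff_mem_nhds.2 fun z hz => ?_⟩
  have hsep : {z} ×ˢ (Φ z \ O) ⊆ {p : Z × X | p.2 ∈ G p.1}ᶜ := by
    rintro ⟨z', x⟩ ⟨rfl, hxΦ, hxO⟩ hxG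
    exact hxO (hz ⟨hxΦ, hxG⟩)
  obtain ⟨U, V, hU, hV, hzU, hΦV, hUV⟩ :=
    generalized_tube_lemma isCompact_singleton ((hΦ.2.1 z).diff hO) hG.isOpen_compl hsep
  have hzΦ : Φ z ⊆ O ∪ V := fun x hx => by
    by_cases hxO : x ∈ O
    · exact Or.inl hxO
    · exact Or.inr (hΦV ⟨hx, hxO⟩)
  filter_upwards [hU.mem_nhds (hzU rfl), (hΦ.2.2 _ (hO.union hV)).mem_nhds hzΦ] with w hwU hwΦ
  rintro x ⟨hxΦ, hxG⟩
  exact (hwΦ hxΦ).resolve_right fun hxV => hUV (mk_mem_prod hwU hxV) hxG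

end IsUsco

namespace IsMinimalUsco

variable {Z X : Type*} [TopologicalSpace Z] [TopologicalSpace X] {Φ : Z → Set X}

theorem exists_isOpen_forall_subset (hΦ : IsMinimalUsco Φ) {U : Set Z} (hU : IsOpen U)
    {O : Set X} (hO : IsOpen O) {z : Z} (hz : z ∈ U) (hzO : (Φ z ∩ O).Nonempty) :
    ∃ V : Set Z, IsOpen V ∧ V.Nonempty ∧ V ⊆ U ∧ ∀ v ∈ V, Φ v ⊆ O := by
  classical
  by_contra! H
  have hne : ∀ w ∈ U, (Φ w \ O).Nonempty := by
    intro w hw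
    by_contra! hwO
    obtain ⟨v, ⟨hvO, -⟩, hv⟩ :=
      H _ ((hΦ.1.2.2 O hO).inter hU) ⟨w, sdiff_eq_empty.1 hwO, hw⟩ inter_subset_right
    exact hv hvO
  -- by `H`, deleting `O` from the values of `Φ` over `U` leaves a smaller usco map
  have hcarve := hΦ.2 _ (hΦ.1.piecewise_diff hU hO hne) fun w => by
    by_cases hw : w ∈ U <;> simp [hw]
  obtain ⟨x, hx, hxO⟩ := hzO
  rw [← hcarve, piecewise_eq_of_mem _ _ _ hz] at hx
  exact hx.2 hxO

theorem quasiContinuous_of_mem (hΦ : IsMinimalUsco Φ) {f : Z → X} (hf : ∀ z, f z ∈ Φ z) :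
    QuasiContinuous f := by
  intro z Oz hOz Ofz hOfz
  obtain ⟨U, hUOz, hU, hzU⟩ := mem_nhds_iff.1 hOz
  obtain ⟨O, hOOfz, hO, hfzO⟩ := mem_nhds_iff.1 hOfz
  obtain ⟨V, hV, hVne, hVU, hVO⟩ := hΦ.exists_isOpen_forall_subset hU hO hzU ⟨f z, hf z, hfzO⟩
  exact ⟨V, hV, hVne, hVU.trans hUOz, image_subset_iff.2 fun v hv => hOOfz (hVO v hv (hf v))⟩

theorem singleValuedAt_of_continuousAt [T2Space X] (hΦ : IsMinimalUsco Φ) {f : Z → X}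
    (hf : ∀ z, f z ∈ Φ z) {z : Z} (hfz : ContinuousAt f z) : SingleValuedAt Φ z := by
  refine ⟨f z, eq_singleton_iff_unique_mem.2 ⟨hf z, fun y hy => ?_⟩⟩
  by_contra hyz
  obtain ⟨W, W', hW, hW', hfzW, hyW', hWW'⟩ := t2_separation (Ne.symm hyz)
  obtain ⟨U, hUW, hU, hzU⟩ := mem_nhds_iff.1 (hfz (hW.mem_nhds hfzW))
  obtain ⟨V, -, ⟨v, hv⟩, hVU, hVW'⟩ := hΦ.exists_isOpen_forall_subset hU hW' hzU ⟨y, hy, hyW'⟩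
  exact hWW'.le_bot ⟨hUW (hVU hv), hVW' v hv (hf v)⟩

theorem exists_quasiContinuous_selection [T2Space X] (hΦ : IsMinimalUsco Φ) :
    ∃ g : Z → X, QuasiContinuous g ∧ ContinuityPoints g ⊆ {z | SingleValuedAt Φ z} :=
  ⟨fun z => (hΦ.1.1 z).some, hΦ.quasiContinuous_of_mem fun z => (hΦ.1.1 z).some_mem,
    fun _ => hΦ.singleValuedAt_of_continuousAt fun z => (hΦ.1.1 z).some_mem⟩

end IsMinimalUsco


section ClusterSet

variable {Z X : Type*} [TopologicalSpace Z] [TopologicalSpace X]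

def clusterSet (f : Z → X) (z : Z) : Set X :=
  {x | (z, x) ∈ closure (range fun w => (w, f w))}

theorem mem_clusterSet_self (f : Z → X) (z : Z) : f z ∈ clusterSet f z :=
  subset_closure (mem_range_self z)

theorem clusterSet_subset_closure_image {f : Z → X} {z : Z} {V : Set Z} (hV : V ∈ 𝓝 z) :
    clusterSet f z ⊆ closure (f '' V) := fun x hx =>
  mem_closure_iff_nhds.2 fun W hW => by
    obtain ⟨_, ⟨hwV, hwW⟩, w, rfl⟩ := mem_closure_iff_nhds.1 hx _ (prod_mem_nhds hV hW)
    exact ⟨f w, hwW, mem_image_of_mem f hwV⟩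

theorem isClosed_clusterSet_graph (f : Z → X) : IsClosed {p : Z × X | p.2 ∈ clusterSet f p.1} :=
  isClosed_closure

end ClusterSet

section LimitSets

variable {Y X : Type*} [TopologicalSpace Y] [TopologicalSpace X]

theorem isUsco_iInter_closure [RegularSpace X] {A : Y → ℕ → Set X}
    (hcompact : ∀ y, IsCompact (⋂ n, closure (A y n)))
    (hne : ∀ y, (⋂ n, closure (A y n)).Nonempty)
    (hconv : ∀ y O, IsOpen O → ⋂ n, closure (A y n) ⊆ O → ∃ m, A y m ⊆ O)
    (hloc : ∀ y m, ∀ᶠ y' in 𝓝 y, ∃ n, A y' n ⊆ A y m) :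
    IsUsco fun y => ⋂ n, closure (A y n) := by
  refine ⟨hne, hcompact, fun O hO => isOpen_iff_mem_nhds.2 fun y hy => ?_⟩
  obtain ⟨O₁, hO₁, hyO₁, hO₁O⟩ := (hcompact y).exists_isOpen_closure_subset (hO.mem_nhdsSet.2 hy)
  obtain ⟨m, hm⟩ := hconv y O₁ hO₁ hyO₁
  filter_upwards [hloc y m] with y' ⟨n, hn⟩
  exact (iInter_subset _ n).trans ((closure_mono (hn.trans hm)).trans hO₁O)

theorem QuasiContinuous.continuousAt_of_singleValuedAt {Z : Type*} [TopologicalSpace Z]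
    [RegularSpace X] {f : Z → X} (hf : QuasiContinuous f) {D : Set Z} (hD : Dense D)
    {Φ : D → Set X} (hΦ : IsUsco Φ) (hΦf : ∀ w, Φ w ⊆ clusterSet f w) {z : D}
    (hz : SingleValuedAt Φ z) : ContinuousAt f z := by
  obtain ⟨x, hx⟩ := hz
  have hfx : Tendsto f (𝓝 z) (𝓝 x) := by
    refine (closed_nhds_basis x).tendsto_right_iff.2 fun C ⟨hC, hCc⟩ => ?_
    obtain ⟨U, hU, hUD⟩ := isOpen_induced_iff.1 (hΦ.2.2 _ isOpen_interior)
    have hzU : (z : Z) ∈ U := by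
      change z ∈ Subtype.val ⁻¹' U
      simpa [hUD, hx] using mem_interior_iff_mem_nhds.2 hC
    filter_upwards [hU.mem_nhds hzU] with z₁ hz₁
    by_contra hz₁C
    obtain ⟨V, hV, hVne, hVU, hVC⟩ := hf z₁ U (hU.mem_nhds hz₁) Cᶜ (hCc.isOpen_compl.mem_nhds hz₁C)
    obtain ⟨w, hwV, hwD⟩ := hD.inter_open_nonempty V hV hVne
    have hin : Φ ⟨w, hwD⟩ ⊆ interior C := by
      have : (⟨w, hwD⟩ : D) ∈ Subtype.val ⁻¹' U := hVU hwV
      rwa [hUD] at this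
    have hout : Φ ⟨w, hwD⟩ ⊆ (interior C)ᶜ := closure_compl (s := C) ▸
      (hΦf _).trans ((clusterSet_subset_closure_image (hV.mem_nhds hwV)).trans (closure_mono hVC))
    obtain ⟨y, hy⟩ := hΦ.1 ⟨w, hwD⟩
    exact hout hy (hin hy)
  have hfzx : f z ⤳ x := specializes_iff_pure.2 (hfx.mono_left (pure_le_nhds _))
  exact hfx.mono_right hfzx.symm

end LimitSets

theorem Dense.image_val_mem_residual {Z : Type*} [TopologicalSpace Z] {D : Set Z} (hD : Dense D)
    (hDg : IsGδ D) {S : Set D} (hS : S ∈ residual D) : Subtype.val '' S ∈ residual Z := by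
  obtain ⟨T, hTo, hTd, hTc, hTS⟩ := mem_residual_iff.1 hS
  choose! O hO hOT using fun t ht => isOpen_induced_iff.1 (hTo t ht)
  have hOd : ∀ t ∈ T, Dense (O t) := fun t ht => by
    have hsub := image_preimage_subset ((↑) : D → Z) (O t)
    rw [hOT t ht] at hsub
    exact (hD.denseRange_val.dense_image continuous_subtype_val (hTd t ht)).mono hsub
  filter_upwards [residual_of_dense_Gδ hDg hD, (countable_bInter_mem hTc).2 fun t ht =>
    residual_of_dense_open (hO t ht) (hOd t ht)] with z hzD hzO
  exact ⟨⟨z, hzD⟩, hTS (mem_sInter.2 fun t ht => hOT t ht ▸ mem_iInter₂.1 hzO t ht), rfl⟩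

section DeterminationGame

variable {X Z : Type*} {σ : (n : ℕ) → (Fin (n + 1) → Set X) → Set X}

def IsLegalPrefix (σ : (n : ℕ) → (Fin (n + 1) → Set X) → Set X) (A : ℕ → Set X) (n : ℕ) :
    Prop :=
  (A 0).Nonempty ∧ ∀ k, k < n → (A (k + 1)).Nonempty ∧ A (k + 1) ⊆ σ k (fun i => A i.1)

namespace IsLegalPrefix

variable {A B : ℕ → Set X} {m n : ℕ}

theorem mono (h : IsLegalPrefix σ A n) (hmn : m ≤ n) : IsLegalPrefix σ A m :=
  ⟨h.1, fun k hk => h.2 k (hk.trans_le hmn)⟩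

theorem congr (h : IsLegalPrefix σ A n) (hBA : ∀ k ≤ n, B k = A k) : IsLegalPrefix σ B n := by
  refine ⟨hBA 0 n.zero_le ▸ h.1, fun k hk => ?_⟩
  have hσ : (fun i : Fin (k + 1) => B i.1) = fun i => A i.1 :=
    funext fun i => hBA i (by omega)
  rw [hσ, hBA (k + 1) hk]
  exact h.2 k hk

theorem succ (h : IsLegalPrefix σ A n) (hBA : ∀ k ≤ n, B k = A k) (hB : (B (n + 1)).Nonempty)
    (hBσ : B (n + 1) ⊆ σ n fun i => A i.1) : IsLegalPrefix σ B (n + 1) := by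
  have hσ : (fun i : Fin (n + 1) => B i.1) = fun i => A i.1 := funext fun i => hBA i (by omega)
  refine ⟨(h.congr hBA).1, fun k hk => ?_⟩
  rcases Nat.lt_succ_iff_lt_or_eq.1 hk with hk | rfl
  · exact (h.congr hBA).2 k hk
  · exact ⟨hB, hσ ▸ hBσ⟩

theorem shrink_last (h : IsLegalPrefix σ A n) (hBA : ∀ k < n, B k = A k) (hB : (B n).Nonempty)
    (hBA_last : B n ⊆ A n) : IsLegalPrefix σ B n := by
  cases n with
  | zero => exact ⟨hB, fun k hk => absurd hk k.not_lt_zero⟩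
  | succ m =>
    exact (h.mono m.le_succ).succ (fun k hk => hBA k (by omega)) hB
      (hBA_last.trans (h.2 m m.lt_succ_self).2)

end IsLegalPrefix

variable [TopologicalSpace X] [TopologicalSpace Z]

def IsStrategy (σ : (n : ℕ) → (Fin (n + 1) → Set X) → Set X) : Prop :=
  ∀ A n, IsLegalPrefix σ A n →
    (σ n fun i => A i.1).Nonempty ∧ ∃ O, IsOpen O ∧ σ n (fun i => A i.1) = A n ∩ O

def IsOpenLegalPrefix (σ : (n : ℕ) → (Fin (n + 1) → Set X) → Set X) (f : Z → X)
    (U : ℕ → Set Z) (n : ℕ) : Prop :=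
  IsOpen (U n) ∧ IsLegalPrefix σ (fun k => f '' U k) n

/-- Going from `V` to `U`, `Σ` may replace its last move `V n` by a smaller set. -/
def IsChildOf (n : ℕ) (U V : ℕ → Set Z) : Prop :=
  (∀ k < n, U k = V k) ∧ U (n + 1) ⊆ U n ∧ U n ⊆ V n

theorem IsOpenLegalPrefix.exists_child (hσ : IsStrategy σ)
    {f : Z → X} (hf : QuasiContinuous f) {V : ℕ → Set Z} {n : ℕ}
    (hV : IsOpenLegalPrefix σ f V n) {G : Set Z} (hG : IsOpen G) (hGV : (G ∩ V n).Nonempty) :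
    ∃ U, IsOpenLegalPrefix σ f U (n + 1) ∧ IsChildOf n U V ∧ U (n + 1) ⊆ G := by
  classical
  set W := G ∩ V n
  -- `Σ` first replays its last move as `W`
  set V' := Function.update V n W
  have hV'_legal : IsLegalPrefix σ (fun k => f '' V' k) n :=
    hV.2.shrink_last (fun k hk => by simp [V', Function.update_of_ne hk.ne])
      (by simpa [V'] using hGV) (by simpa [V'] using image_mono inter_subset_right)
  obtain ⟨hne, O, hO, hσO⟩ := hσ _ n hV'_legal
  rw [hσO] at hne
  obtain ⟨_, ⟨z, hzW, rfl⟩, hfzO⟩ := hne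
  have hV'n : V' n = W := Function.update_self ..
  rw [hV'n] at hzW hσO
  obtain ⟨T, hT, hTne, hTW, hfTO⟩ :=
    hf z W ((hG.inter hV.1).mem_nhds hzW) O (hO.mem_nhds hfzO)
  refine ⟨Function.update V' (n + 1) T, ⟨by simpa using hT, hV'_legal.succ ?_ ?_ ?_⟩, ?_, ?_⟩
  · intro k hk
    simp [Function.update_of_ne (show k ≠ n + 1 by omega)]
  · simpa using hTne.image f
  · simpa [hσO] using subset_inter (image_mono (f := f) hTW) hfTO
  · refine ⟨fun k hk => ?_, ?_, ?_⟩
    · simp [V', Function.update_of_ne (show k ≠ n + 1 by omega), Function.update_of_ne hk.ne]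
    · simpa [V'] using hTW
    · simp [V', W]
  · simpa using hTW.trans inter_subset_left

end DeterminationGame

section Levels

variable {X Z : Type*} [TopologicalSpace Z]
  {σ : (n : ℕ) → (Fin (n + 1) → Set X) → Set X} {f : Z → X}

def IsLevel (σ : (n : ℕ) → (Fin (n + 1) → Set X) → Set X) (f : Z → X) (n : ℕ)
    (S : Set (ℕ → Set Z)) : Prop :=
  (∀ U ∈ S, IsOpenLegalPrefix σ f U n) ∧ S.PairwiseDisjoint (· n) ∧ Dense (⋃ U ∈ S, U n)

theorem exists_isLevel_zero : ∃ S, IsLevel σ f 0 S := by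
  obtain ⟨S, hS, hdisj, hdense⟩ := exists_pairwiseDisjoint_dense_biUnion
    (C := {U | IsOpenLegalPrefix σ f U 0}) (t := (· 0)) fun G hG hGne =>
      ⟨fun _ => G, ⟨hG, hGne.image f, fun k hk => absurd hk k.not_lt_zero⟩, hGne, subset_rfl⟩
  exact ⟨S, hS, hdisj, hdense⟩

theorem IsLevel.exists_isLevel_succ [TopologicalSpace X] (hσ : IsStrategy σ)
    (hf : QuasiContinuous f) {n : ℕ} {S : Set (ℕ → Set Z)} (hS : IsLevel σ f n S) :
    ∃ S', IsLevel σ f (n + 1) S' ∧ ∀ U ∈ S', ∃ V ∈ S, IsChildOf n U V := by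
  obtain ⟨S', hS', hdisj, hdense⟩ := exists_pairwiseDisjoint_dense_biUnion
    (C := {U | IsOpenLegalPrefix σ f U (n + 1) ∧ ∃ V ∈ S, IsChildOf n U V})
    (t := (· (n + 1))) fun G hG hGne => by
      obtain ⟨z, hzG, hz⟩ := hS.2.2.inter_open_nonempty G hG hGne
      obtain ⟨V, hV, hzV⟩ := mem_iUnion₂.1 hz
      obtain ⟨U, hU, hUV, hUG⟩ := (hS.1 V hV).exists_child hσ hf hG ⟨z, hzG, hzV⟩
      exact ⟨U, ⟨hU, V, hV, hUV⟩, image_nonempty.1 (hU.2.2 n n.lt_succ_self).1, hUG⟩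
  exact ⟨S', ⟨fun U hU => (hS' hU).1, hdisj, hdense⟩, fun U hU => (hS' hU).2⟩

theorem exists_levels [TopologicalSpace X] (hσ : IsStrategy σ)
    (hf : QuasiContinuous f) :
    ∃ S : ℕ → Set (ℕ → Set Z), ∀ n, IsLevel σ f n (S n) ∧
      ∀ U ∈ S (n + 1), ∃ V ∈ S n, IsChildOf n U V := by
  obtain ⟨S₀, hS₀⟩ := exists_isLevel_zero (σ := σ) (f := f)
  have step : ∀ n S, ∃ S', IsLevel σ f n S →
      IsLevel σ f (n + 1) S' ∧ ∀ U ∈ S', ∃ V ∈ S, IsChildOf n U V := by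
    intro n S
    by_cases hS : IsLevel σ f n S
    · exact (hS.exists_isLevel_succ hσ hf).imp fun _ h _ => h
    · exact ⟨∅, fun h => absurd h hS⟩
  choose next hnext using step
  let S : ℕ → Set (ℕ → Set Z) := fun n => Nat.rec S₀ next n
  have hS : ∀ n, IsLevel σ f n (S n) := by
    intro n
    induction n with
    | zero => exact hS₀
    | succ n ih => exact (hnext n _ ih).1
  exact ⟨S, fun n => ⟨hS n, (hnext n _ (hS n)).2⟩⟩

end Levels

section Branch

variable {Z : Type*} {S : ℕ → Set (ℕ → Set Z)} {z w : Z} {n : ℕ}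

/-- The member of `S n` whose last move contains `z`: unique when these last moves are disjoint,
a junk value when there is none. -/
noncomputable def branch (S : ℕ → Set (ℕ → Set Z)) (z : Z) (n : ℕ) : ℕ → Set Z :=
  Classical.epsilon fun U => U ∈ S n ∧ z ∈ U n

theorem branch_spec (h : ∃ U ∈ S n, z ∈ U n) : branch S z n ∈ S n ∧ z ∈ branch S z n n :=
  Classical.epsilon_spec h

theorem eq_branch (hS : (S n).PairwiseDisjoint (· n)) {U : ℕ → Set Z} (hU : U ∈ S n)
    (hz : z ∈ U n) : U = branch S z n :=
  have hb := branch_spec ⟨U, hU, hz⟩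
  hS.elim hU hb.1 (not_disjoint_iff.2 ⟨z, hz, hb.2⟩)

theorem branch_eq_of_mem (hS : (S n).PairwiseDisjoint (· n)) (hz : ∃ U ∈ S n, z ∈ U n)
    (hw : w ∈ branch S z n n) : branch S w n = branch S z n :=
  (eq_branch hS (branch_spec hz).1 hw).symm

theorem branch_isChildOf (hdisj : ∀ n, (S n).PairwiseDisjoint (· n))
    (hchild : ∀ n, ∀ U ∈ S (n + 1), ∃ V ∈ S n, IsChildOf n U V) (hz : ∀ n, ∃ U ∈ S n, z ∈ U n) :
    IsChildOf n (branch S z (n + 1)) (branch S z n) := by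
  obtain ⟨hmem, hzmem⟩ := branch_spec (hz (n + 1))
  obtain ⟨V, hV, hchildV⟩ := hchild n _ hmem
  rwa [eq_branch (hdisj n) hV (hchildV.2.2 (hchildV.2.1 hzmem))] at hchildV

theorem branch_of_lt (hdisj : ∀ n, (S n).PairwiseDisjoint (· n))
    (hchild : ∀ n, ∀ U ∈ S (n + 1), ∃ V ∈ S n, IsChildOf n U V) (hz : ∀ n, ∃ U ∈ S n, z ∈ U n)
    {k m : ℕ} (hkm : k < m) : branch S z m k = branch S z (k + 1) k := by
  induction m with
  | zero => exact absurd hkm k.not_lt_zero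
  | succ m ih =>
    rcases Nat.lt_succ_iff_lt_or_eq.1 hkm with hkm | rfl
    · rw [(branch_isChildOf hdisj hchild hz).1 k hkm, ih hkm]
    · rfl

end Branch

theorem exists_dense_isGδ_plays {X Z : Type*} [TopologicalSpace X] [TopologicalSpace Z]
    [BaireSpace Z] {σ : (n : ℕ) → (Fin (n + 1) → Set X) → Set X} (hσ : IsStrategy σ)
    {f : Z → X} (hf : QuasiContinuous f) :
    ∃ D : Set Z, Dense D ∧ IsGδ D ∧ ∃ Q : Z → ℕ → Set Z, ∀ z ∈ D, (∀ k, z ∈ Q z k) ∧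
      (∀ n, IsLegalPrefix σ (fun k => f '' Q z k) n) ∧
      ∀ m, ∀ᶠ w in 𝓝[D] z, Q w (m + 1) ⊆ Q z m := by
  obtain ⟨S, hS⟩ := exists_levels hσ hf
  have hdisj n := (hS n).1.2.1
  have hchild n := (hS n).2
  have hopen n : IsOpen (⋃ U ∈ S n, U n) := isOpen_biUnion fun U hU => ((hS n).1.1 U hU).1
  refine ⟨⋂ n, ⋃ U ∈ S n, U n, dense_iInter_of_isOpen hopen fun n => (hS n).1.2.2,
    .iInter fun n => (hopen n).isGδ, fun z k => branch S z (k + 1) k, fun z hz => ?_⟩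
  have hzS n : ∃ U ∈ S n, z ∈ U n := by simpa using mem_iInter.1 hz n
  refine ⟨fun k => (branch_isChildOf hdisj hchild hzS).2.1 (branch_spec (hzS (k + 1))).2,
    fun n => ?_, fun m => ?_⟩
  · refine (((hS (n + 1)).1.1 _ (branch_spec (hzS (n + 1))).1).2.mono n.le_succ).congr
      fun k hk => ?_
    simp only [branch_of_lt hdisj hchild hzS (Nat.lt_succ_of_le hk)]
  · obtain ⟨hmem, hzmem⟩ := branch_spec (hzS (m + 1))
    filter_upwards [nhdsWithin_le_nhds (((hS (m + 1)).1.1 _ hmem).1.mem_nhds hzmem),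
      self_mem_nhdsWithin] with w hw hwD
    have hwS n : ∃ U ∈ S n, w ∈ U n := by simpa using mem_iInter.1 hwD n
    calc branch S w (m + 2) (m + 1) ⊆ branch S w (m + 1) (m + 1) :=
          (branch_isChildOf hdisj hchild hwS).2.2
      _ = branch S z (m + 1) (m + 1) := by rw [branch_eq_of_mem (hdisj _) (hzS _) hw]
      _ ⊆ branch S z (m + 1) m := (branch_isChildOf hdisj hchild hzS).2.1

theorem GameDetermined.exists_dense_isGδ_minimalUsco {X Z : Type*} [TopologicalSpace X]
    [T3Space X] [TopologicalSpace Z] [BaireSpace Z] (hX : GameDetermined X) {f : Z → X}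
    (hf : QuasiContinuous f) :
    ∃ D : Set Z, Dense D ∧ IsGδ D ∧ ∃ Φ : D → Set X, IsMinimalUsco Φ ∧
      ∀ z, SingleValuedAt Φ z → ContinuousAt f z := by
  obtain ⟨σ, hσ, hwin⟩ := hX
  obtain ⟨D, hDd, hDg, Q, hQ⟩ := exists_dense_isGδ_plays hσ hf
  set A : D → ℕ → Set X := fun z k => f '' Q z k
  have hfA (z : D) : f z ∈ ⋂ n, closure (A z n) :=
    mem_iInter.2 fun n => subset_closure (mem_image_of_mem f ((hQ z z.2).1 n))
  have hwinA (z : D) := hwin (A z)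
    ⟨((hQ z z.2).2.1 0).1, fun k => ((hQ z z.2).2.1 (k + 1)).2 k k.lt_succ_self⟩
  have hK : IsUsco fun z : D => ⋂ n, closure (A z n) :=
    isUsco_iInter_closure (fun z => (hwinA z).1) (fun z => ⟨f z, hfA z⟩)
      (fun z O hO hKO =>
        ((hwinA z).2.resolve_left (nonempty_of_mem (hfA z)).ne_empty O hO hKO).imp
          fun m hm => hm m le_rfl)
      fun z m => ((eventually_nhds_subtype_iff D z _).2 ((hQ z z.2).2.2 m)).mono
        fun _ hw => ⟨m + 1, image_mono hw⟩
  have hgraph : IsClosed {p : D × X | p.2 ∈ clusterSet f p.1} :=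
    (isClosed_clusterSet_graph f).preimage (continuous_subtype_val.prodMap continuous_id)
  obtain ⟨Φ, hΦ, hΦK⟩ := (hK.inter_of_isClosed_graph hgraph
    fun z => ⟨f z, hfA z, mem_clusterSet_self f z⟩).exists_minimal
  exact ⟨D, hDd, hDg, Φ, hΦ, fun z hz => hf.continuousAt_of_singleValuedAt hDd hΦ.1
    (fun w => (hΦK w).trans inter_subset_right) hz⟩

/-- For a class `𝒞` (= `P`) of Baire spaces closed under taking dense
`Gδ`-subsets, a game determined Tychonoff space `X` is (strong) `𝒞`-Piotrowski if and only
if it is (strong) `𝒞`-Stegall. -/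
theorem piotrowski_iff_stegall_of_gameDetermined (P : SpaceClass.{u}) (hB : IsBaireClass P)
    (hGδ : ClosedUnderDenseGdelta P)
    (X : Type v) [TopologicalSpace X] [T35Space X] (hX : GameDetermined X) :
    (IsPiotrowskiFor P X ↔ IsStegallFor P X) ∧
    (IsStrongPiotrowskiFor P X ↔ IsStrongStegallFor P X) := by
  refine ⟨⟨fun h Z _ hZ hne Φ hΦ => ?_, fun h Z _ hZ hne f hf => ?_⟩,
    ⟨fun h Z _ hZ Φ hΦ => ?_, fun h Z _ hZ f hf => ?_⟩⟩
  · obtain ⟨g, hg, hgΦ⟩ := hΦ.exists_quasiContinuous_selection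
    obtain ⟨z, hz⟩ := h Z hZ hne g hg
    exact ⟨z, hgΦ hz⟩
  · have := hB Z hZ
    obtain ⟨D, hDd, hDg, Φ, hΦ, hΦf⟩ := hX.exists_dense_isGδ_minimalUsco hf
    obtain ⟨z, hz⟩ := h D (hGδ Z hZ D hDd hDg) (hDd.nonempty.to_subtype) Φ hΦ
    exact ⟨z, hΦf z hz⟩
  · obtain ⟨g, hg, hgΦ⟩ := hΦ.exists_quasiContinuous_selection
    exact mem_of_superset (h Z hZ g hg) hgΦ
  · have := hB Z hZ
    obtain ⟨D, hDd, hDg, Φ, hΦ, hΦf⟩ := hX.exists_dense_isGδ_minimalUsco hf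
    have hres := hDd.image_val_mem_residual hDg (h D (hGδ Z hZ D hDd hDg) Φ hΦ)
    exact mem_of_superset hres fun _ ⟨z, hz, hzf⟩ => hzf ▸ hΦf z hz
end

section
/- The identity map from the real line with the Euclidean topology to the Sorgenfrey line is quasicontinuous but has no continuity point; moreover the Sorgenfrey line is fragmented by the Euclidean metric. Consequently, the Sorgenfrey line is fragmentable but not Piotrowski. -/
open Topology Set

universe u v

/-- The Sorgenfrey line: the real line with the topology generated by half-open intervals
`[a, b)`, `a < b`. -/
def SorgLine : Type := ℝ

instance : TopologicalSpace SorgLine :=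
  TopologicalSpace.generateFrom {s : Set ℝ | ∃ a b : ℝ, a < b ∧ s = Set.Ico a b}

/-- The identity map from the Euclidean real line to the Sorgenfrey line. -/
def toSorg : ℝ → SorgLine := id

/-- The identity map from the Sorgenfrey line to the Euclidean real line. -/
def fromSorg : SorgLine → ℝ := id

def sIco (a b : ℝ) : Set SorgLine := {x | a ≤ fromSorg x ∧ fromSorg x < b}

lemma sorg_isOpen_sIco (a b : ℝ) (hab : a < b) : IsOpen (sIco a b) :=
  TopologicalSpace.GenerateOpen.basic _ ⟨a, b, hab, rfl⟩

lemma sorg_nhds {V : Set SorgLine} (h : IsOpen V) :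
    ∀ x ∈ V, ∃ ε : ℝ, 0 < ε ∧ sIco (fromSorg x) (fromSorg x + ε) ⊆ V := by
  have h' : TopologicalSpace.GenerateOpen
      {s : Set ℝ | ∃ a b : ℝ, a < b ∧ s = Set.Ico a b} V := h
  clear h
  induction h' with
  | basic s hs =>
    obtain ⟨a, b, hab, rfl⟩ := hs
    intro x hx
    have hx1 : a ≤ fromSorg x := hx.1
    have hx2 : fromSorg x < b := hx.2
    refine ⟨b - fromSorg x, by linarith, fun y hy => ?_⟩
    refine ⟨le_trans hx1 hy.1, ?_⟩
    show fromSorg y < b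
    have := hy.2; linarith
  | univ => exact fun x _ => ⟨1, one_pos, fun y _ => trivial⟩
  | inter s t _ _ ihs iht =>
    intro x hx
    obtain ⟨ε1, h1, hs⟩ := ihs x hx.1
    obtain ⟨ε2, h2, ht⟩ := iht x hx.2
    refine ⟨min ε1 ε2, lt_min h1 h2, fun y hy => ⟨hs ⟨hy.1, ?_⟩, ht ⟨hy.1, ?_⟩⟩⟩
    · have := min_le_left ε1 ε2; have := hy.2; dsimp [sIco] at *; linarith
    · have := min_le_right ε1 ε2; have := hy.2; dsimp [sIco] at *; linarith
  | sUnion S hS ih =>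
    intro x hx
    obtain ⟨s, hsS, hxs⟩ := hx
    obtain ⟨ε, hε, hsub⟩ := ih s hsS x hxs
    exact ⟨ε, hε, fun y hy => ⟨s, hsS, hsub hy⟩⟩

/-- The identity map from the Euclidean real line to the Sorgenfrey line is
quasicontinuous but has no continuity point; the Sorgenfrey line is fragmented by the
Euclidean metric. Consequently the Sorgenfrey line is fragmentable but (the real line being a
Baire space) not Piotrowski. -/
theorem sorgenfrey_fragmentable_not_piotrowski :
    QuasiContinuous toSorg ∧ (∀ x : ℝ, ¬ ContinuousAt toSorg x) ∧
    IsMetric (fun x y : SorgLine => |fromSorg x - fromSorg y|) ∧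
    FragmentedBy SorgLine (fun x y => |fromSorg x - fromSorg y|) ∧
    Fragmentable SorgLine ∧ ¬ IsPiotrowski.{0, 0} SorgLine := by
  have hqc : QuasiContinuous toSorg := by
    intro x Ox hOx Oy hOy
    obtain ⟨δ, hδ, hball⟩ := Metric.mem_nhds_iff.mp hOx
    obtain ⟨V, hVOy, hVopen, hxV⟩ := mem_nhds_iff.mp hOy
    obtain ⟨ε, hε, hIco⟩ := sorg_nhds hVopen (toSorg x) hxV
    have hfx : fromSorg (toSorg x) = x := rfl
    rw [hfx] at hIco
    have hm : 0 < min δ ε := lt_min hδ hε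
    refine ⟨Set.Ioo x (x + min δ ε), isOpen_Ioo, ⟨x + min δ ε / 2, by constructor <;> linarith⟩, ?_, ?_⟩
    · intro y hy
      apply hball
      have h1 := hy.1; have h2 := hy.2
      have : min δ ε ≤ δ := min_le_left _ _
      simp only [Metric.mem_ball, Real.dist_eq]
      rw [abs_lt]; constructor <;> linarith
    · rintro _ ⟨y, hy, rfl⟩
      have hle : min δ ε ≤ ε := min_le_right _ _
      refine hVOy (hIco ⟨le_of_lt hy.1, ?_⟩)
      show (y : ℝ) < x + ε
      have := hy.2; linarith
  have hnc : ∀ x : ℝ, ¬ ContinuousAt toSorg x := by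
    intro x hc
    have hmem : sIco x (x + 1) ∈ nhds (toSorg x) :=
      (sorg_isOpen_sIco x (x + 1) (by linarith)).mem_nhds ⟨le_refl x, by show (x:ℝ) < x + 1; linarith⟩
    have hpre : toSorg ⁻¹' sIco x (x + 1) ∈ nhds x := hc hmem
    obtain ⟨δ, hδ, hball⟩ := Metric.mem_nhds_iff.mp hpre
    have hmem2 : x - δ / 2 ∈ Metric.ball x δ := by
      simp only [Metric.mem_ball, Real.dist_eq]
      rw [abs_lt]; constructor <;> linarith
    have := (hball hmem2).1
    have : x ≤ x - δ / 2 := this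
    linarith
  have hmet : IsMetric (fun x y : SorgLine => |fromSorg x - fromSorg y|) := by
    refine ⟨fun x => by simp, fun x y h => ?_, fun x y => abs_sub_comm _ _,
      fun x y z => abs_sub_le _ _ _⟩
    have : fromSorg x - fromSorg y = 0 := abs_eq_zero.mp h
    have hxy : fromSorg x = fromSorg y := by linarith
    exact hxy
  have hfrag : FragmentedBy SorgLine (fun x y => |fromSorg x - fromSorg y|) := by
    rintro ε hε A ⟨a, ha⟩
    refine ⟨sIco (fromSorg a) (fromSorg a + ε / 2),
      sorg_isOpen_sIco _ _ (by linarith),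
      ⟨a, ha, le_refl _, by show fromSorg a < fromSorg a + ε/2; linarith⟩, ?_⟩
    rintro x ⟨_, hx1, hx2⟩ y ⟨_, hy1, hy2⟩
    show |fromSorg x - fromSorg y| < ε
    rw [abs_lt]; constructor <;> linarith
  refine ⟨hqc, hnc, hmet, hfrag, ⟨_, hmet, hfrag⟩, ?_⟩
  intro hP
  obtain ⟨z, hz⟩ := hP ℝ (inferInstance : BaireSpace ℝ) ⟨0⟩ toSorg hqc
  exact hnc z hz
end
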